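/- arXiv:1012.0014 — 2 statements merged into one kernel-verified Lean document; each statement's English description precedes it below -/
import Mathlib

section
/- The number of standard Young tableaux of shape ρ equals |ρ|! divided by the product of the hook lengths of ρ (the hook length formula). -/
open scoped Classical BigOperators
noncomputable section

namespace ChernTensor

/-- The rectangular Young diagram with `r` rows each of length `c`. -/
def rect (r c : ℕ) : YoungDiagram :=
  ⟨Finset.range r ×ˢ Finset.range c, by
    intro p q hle hp
    simp only [Finset.coe_product, Set.mem_prod, Finset.mem_coe, Finset.mem_range] at hp ⊢
    exact ⟨lt_of_le_of_lt hle.1 hp.1, lt_of_le_of_lt hle.2 hp.2⟩⟩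

/-- The complement of a diagram `d` (rotated by 180°) inside the rectangle
with `r` rows and `c` columns. -/
def complIn (r c : ℕ) (d : YoungDiagram) : YoungDiagram :=
  ⟨(Finset.range r ×ˢ Finset.range c).filter
      (fun p => (r - 1 - p.1, c - 1 - p.2) ∉ d), by
    intro p q hle hp
    simp only [Finset.coe_filter, Set.mem_setOf_eq, Finset.mem_product,
      Finset.mem_range] at hp ⊢
    refine ⟨⟨lt_of_le_of_lt hle.1 hp.1.1, lt_of_le_of_lt hle.2 hp.1.2⟩, fun hq => hp.2 ?_⟩
    exact d.isLowerSet (Prod.mk_le_mk.mpr ⟨Nat.sub_le_sub_left hle.1 _,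
      Nat.sub_le_sub_left hle.2 _⟩) hq⟩

/-- The complement `e×f − ν̃ = (e − ν*_f, …, e − ν*_1)` of `ν` in the rectangle
with `f` rows each of length `e` (the paper's `e×f`). -/
def rectCompl (e f : ℕ) (ν : YoungDiagram) : YoungDiagram :=
  complIn f e ν.transpose

/-- The product of the hook lengths of all boxes of a Young diagram, as a rational. -/
def hookProd (ν : YoungDiagram) : ℚ :=
  ∏ c ∈ ν.cells, ((ν.rowLen c.1 + ν.colLen c.2 - c.1 - c.2 - 1 : ℕ) : ℚ)

/-- The content polynomial `(n | ρ) = ∏_{(i,j) ∈ ρ} (n + j − i)` evaluated at `n`. -/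
def contPoly (n : ℚ) (ρ : YoungDiagram) : ℚ :=
  ∏ c ∈ ρ.cells, (n + (c.2 : ℚ) - (c.1 : ℚ))

/-- The skew content polynomial `(n | ρ − σ) = ∏_{(i,j) ∈ ρ/σ} (n + j − i)`. -/
def skewContPoly (n : ℚ) (ρ σ : YoungDiagram) : ℚ :=
  ∏ c ∈ ρ.cells \ σ.cells, (n + (c.2 : ℚ) - (c.1 : ℚ))

/-- `T : ℕ×ℕ → ℕ` is a Littlewood–Richardson skew tableau of shape `ν/λ` and
content `μ`: entries (≥ 1) exactly on the skew cells, rows weakly increasing,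
columns strictly increasing, exactly `μ_k` entries equal to `k` (1-indexed),
and the reverse reading word is a lattice word. -/
def IsLRTableau (lam mu nu : YoungDiagram) (T : ℕ × ℕ → ℕ) : Prop :=
  (∀ c : ℕ × ℕ, c ∈ nu.cells \ lam.cells ↔ T c ≠ 0) ∧
  (∀ i j j', j ≤ j' → (i, j) ∈ nu.cells \ lam.cells → (i, j') ∈ nu.cells \ lam.cells →
    T (i, j) ≤ T (i, j')) ∧
  (∀ i i' j, i < i' → (i, j) ∈ nu.cells \ lam.cells → (i', j) ∈ nu.cells \ lam.cells →
    T (i, j) < T (i', j)) ∧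
  (∀ k : ℕ, ((nu.cells \ lam.cells).filter (fun c => T c = k + 1)).card = mu.rowLen k) ∧
  (∀ c ∈ nu.cells \ lam.cells, ∀ k : ℕ,
    (((nu.cells \ lam.cells).filter
        (fun d => (d.1 < c.1 ∨ (d.1 = c.1 ∧ c.2 ≤ d.2)) ∧ T d = k + 2)).card ≤
     ((nu.cells \ lam.cells).filter
        (fun d => (d.1 < c.1 ∨ (d.1 = c.1 ∧ c.2 ≤ d.2)) ∧ T d = k + 1)).card))

/-- The Littlewood–Richardson coefficient `c^ν_{λμ}`, defined as the number of
Littlewood–Richardson skew tableaux of shape `ν/λ` and content `μ`. -/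
def lrCoeff (lam mu nu : YoungDiagram) : ℕ :=
  if lam ≤ nu then Nat.card {T : ℕ × ℕ → ℕ // IsLRTableau lam mu nu T} else 0

/-- The universal coefficient `P_{λ,μ}(e,f) = ∑_ν c^{ν*}_{λ*,μ} (e|ν−λ)(f|ν*−μ)/h(ν)`. -/
def P (lam mu : YoungDiagram) (e f : ℚ) : ℚ :=
  ∑ᶠ nu : YoungDiagram, (lrCoeff lam.transpose mu nu.transpose : ℚ) *
    skewContPoly e nu lam * skewContPoly f nu.transpose mu / hookProd nu

/-- A semistandard filling of the cells of `lam` with values in `Fin n`: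
weakly increasing along rows, strictly increasing down columns. -/
def IsSSYT (lam : YoungDiagram) {n : ℕ} (T : lam.cells → Fin n) : Prop :=
  (∀ a b : lam.cells, (a : ℕ × ℕ).1 = (b : ℕ × ℕ).1 → (a : ℕ × ℕ).2 ≤ (b : ℕ × ℕ).2 →
    T a ≤ T b) ∧
  (∀ a b : lam.cells, (a : ℕ × ℕ).2 = (b : ℕ × ℕ).2 → (a : ℕ × ℕ).1 < (b : ℕ × ℕ).1 →
    T a < T b)

/-- The Schur polynomial `s_λ(x₁,…,x_n)` evaluated at `x`, as the generating
function of semistandard tableaux. -/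
def schur (lam : YoungDiagram) {n : ℕ} (x : Fin n → ℚ) : ℚ :=
  ∑ᶠ T : {T : lam.cells → Fin n // IsSSYT lam T}, ∏ c : lam.cells, x (T.1 c)

/-- The generalized binomial coefficient `C(a, b) = a(a−1)⋯(a−b+1)/b!`. -/
def gbinom (a : ℚ) (b : ℕ) : ℚ :=
  (∏ i ∈ Finset.range b, (a - i)) / (Nat.factorial b : ℚ)



open Finset Polynomial

section HookAux

variable {ι : Type*} [DecidableEq ι]

lemma coeffs3 (s : Finset ι) (c : ι → ℚ) :
    (∏ j ∈ s, (X - C (c j))).coeff s.card = 1 ∧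
    (∏ j ∈ s, (X - C (c j))).coeff (s.card - 1) =
      (if s.card = 0 then 1 else -∑ j ∈ s, c j) ∧
    (∏ j ∈ s, (X - C (c j))).coeff (s.card - 2) =
      (if s.card = 0 then 1 else if s.card = 1 then -∑ j ∈ s, c j
        else ((∑ j ∈ s, c j)^2 - ∑ j ∈ s, (c j)^2) / 2) := by
  classical
  induction s using Finset.cons_induction with
  | empty => simp
  | cons a s ha ih =>
    obtain ⟨h0, h1, h2⟩ := ih
    have hmonic : (∏ j ∈ s, (X - C (c j))).Monic := monic_prod_of_monic _ _ (fun j _ => monic_X_sub_C _)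
    have hdeg : (∏ j ∈ s, (X - C (c j))).natDegree = s.card := by
      rw [natDegree_prod_of_monic _ _ (fun j _ => monic_X_sub_C _)]
      simp
    have hhi : ∀ k, s.card < k → (∏ j ∈ s, (X - C (c j))).coeff k = 0 := by
      intro k hk
      exact coeff_eq_zero_of_natDegree_lt (hdeg ▸ hk)
    rw [Finset.prod_cons]
    have expand : ∀ k, ((X - C (c a)) * ∏ j ∈ s, (X - C (c j))).coeff k =
        (X * ∏ j ∈ s, (X - C (c j))).coeff k - c a * (∏ j ∈ s, (X - C (c j))).coeff k := by
      intro k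
      rw [sub_mul, coeff_sub, coeff_C_mul]
    refine ⟨?_, ?_, ?_⟩
    · rw [Finset.card_cons, expand, coeff_X_mul, h0, hhi _ (by omega)]
      ring
    · rw [Finset.card_cons, expand]
      rcases Nat.eq_zero_or_pos s.card with h | h
      · have hs : s = ∅ := Finset.card_eq_zero.mp h
        subst hs
        simp
      · have : s.card + 1 - 1 = (s.card - 1) + 1 := by omega
        rw [this, coeff_X_mul]
        have : (s.card - 1) + 1 = s.card := by omega
        rw [this, h1, h0, Finset.sum_cons, if_neg (by omega), if_neg (by omega)]
        ring
    · rw [Finset.card_cons, expand]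
      rcases Nat.eq_zero_or_pos s.card with h | h
      · have hs : s = ∅ := Finset.card_eq_zero.mp h
        subst hs
        simp
      rcases Nat.eq_or_lt_of_le h with h1' | h'
      · -- s.card = 1
        obtain ⟨b, hb⟩ := Finset.card_eq_one.mp h1'.symm
        subst hb
        simp only [Finset.sum_singleton, Finset.prod_singleton, Finset.card_singleton,
          Finset.card_cons, Finset.sum_cons]
        norm_num
        ring
      · -- 2 ≤ s.card
        have e1 : s.card + 1 - 2 = (s.card - 2) + 1 := by omega
        rw [e1, coeff_X_mul]
        have e2 : (s.card - 2) + 1 = s.card - 1 := by omega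
        rw [e2, h2, h1, if_neg (by omega), if_neg (by omega), if_neg (by omega), if_neg (by omega),
          if_neg (by omega), Finset.sum_cons, Finset.sum_cons]
        ring

lemma basis_coeff {s : Finset ι} {v : ι → ℚ} (hvs : Set.InjOn v s) {i : ι} (hi : i ∈ s) :
    (Lagrange.basis s v i).coeff (s.card - 1) = (∏ j ∈ s.erase i, (v i - v j))⁻¹ := by
  unfold Lagrange.basis Lagrange.basisDivisor
  rw [Finset.prod_mul_distrib]
  rw [← map_prod, coeff_C_mul]
  have hcard : (s.erase i).card = s.card - 1 := Finset.card_erase_of_mem hi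
  have := (coeffs3 (s.erase i) v).1
  rw [hcard] at this
  rw [this, mul_one, ← Finset.prod_inv_distrib]

theorem keyIdentity (s : Finset ι) (x : ι → ℚ) (hx : Set.InjOn x s) :
    ∑ r ∈ s, x r * ∏ j ∈ s.erase r, ((x r - 1 - x j) / (x r - x j)) =
      (∑ r ∈ s, x r) - (s.card * (s.card - 1)) / 2 := by
  classical
  rcases le_or_gt s.card 1 with hm | hm
  · rcases Nat.le_one_iff_eq_zero_or_eq_one.mp hm with h | h
    · have : s = ∅ := Finset.card_eq_zero.mp h
      subst this; simp
    · obtain ⟨a, rfl⟩ := Finset.card_eq_one.mp h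
      simp
  -- main case: 2 ≤ s.card
  obtain ⟨n, hn⟩ : ∃ n, s.card = n + 2 := ⟨s.card - 2, by omega⟩
  set W : ℚ[X] := ∏ j ∈ s, (X - C (x j)) with hW
  set Y : ℚ[X] := ∏ j ∈ s, (X - C (x j + 1)) with hY
  set L : ℚ[X] := X * Y - (X - C ((n : ℚ) + 2)) * W with hL
  have hWdeg : W.natDegree = n + 2 := by
    rw [hW, natDegree_prod_of_monic _ _ (fun j _ => monic_X_sub_C _)]
    simp only [natDegree_X_sub_C]
    rw [Finset.sum_const, smul_eq_mul, mul_one, hn]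
  have hYdeg : Y.natDegree = n + 2 := by
    rw [hY, natDegree_prod_of_monic _ _ (fun j _ => monic_X_sub_C _)]
    simp only [natDegree_X_sub_C]
    rw [Finset.sum_const, smul_eq_mul, mul_one, hn]
  obtain ⟨hW0, hW1, hW2⟩ := coeffs3 s x
  obtain ⟨hY0, hY1, hY2⟩ := coeffs3 s (fun j => x j + 1)
  rw [hn] at hW0 hW1 hW2 hY0 hY1 hY2
  rw [if_neg (by omega)] at hW1 hY1
  rw [if_neg (by omega), if_neg (by omega)] at hW2 hY2
  rw [show n + 2 - 1 = n + 1 by omega] at hW1 hY1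
  rw [show n + 2 - 2 = n by omega] at hW2 hY2
  rw [← hW] at hW0 hW1 hW2
  rw [← hY] at hY0 hY1 hY2
  have hWhi : ∀ k, n + 2 < k → W.coeff k = 0 := fun k hk =>
    coeff_eq_zero_of_natDegree_lt (hWdeg ▸ hk)
  have hYhi : ∀ k, n + 2 < k → Y.coeff k = 0 := fun k hk =>
    coeff_eq_zero_of_natDegree_lt (hYdeg ▸ hk)
  have hsumY : ∑ j ∈ s, (x j + 1) = (∑ j ∈ s, x j) + ((n : ℚ) + 2) := by
    rw [Finset.sum_add_distrib, Finset.sum_const, hn]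
    push_cast; ring
  have hsumY2 : ∑ j ∈ s, (x j + 1)^2 = (∑ j ∈ s, (x j)^2) + 2 * (∑ j ∈ s, x j) + ((n : ℚ) + 2) := by
    have : ∀ j ∈ s, (x j + 1)^2 = (x j)^2 + 2 * x j + 1 := fun j _ => by ring
    rw [Finset.sum_congr rfl this, Finset.sum_add_distrib, Finset.sum_add_distrib,
      ← Finset.mul_sum, Finset.sum_const, hn]
    push_cast; ring
  have hexp : ∀ k, L.coeff (k + 1) = Y.coeff k - (W.coeff k - ((n : ℚ) + 2) * W.coeff (k + 1)) := by
    intro k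
    rw [hL, coeff_sub, sub_mul, coeff_sub, coeff_C_mul, coeff_X_mul, coeff_X_mul]
  have hcoeffL : ∀ k, n + 2 ≤ k → L.coeff k = 0 := by
    intro k hk
    obtain ⟨k', rfl⟩ : ∃ k', k = k' + 1 := ⟨k - 1, by omega⟩
    rw [hexp]
    rcases Nat.lt_trichotomy k' (n + 2) with h | h | h
    · have : k' = n + 1 := by omega
      subst this
      have : n + 1 + 1 = n + 2 := by omega
      rw [this, hY1, hW1, hW0, hsumY]
      ring
    · subst h
      rw [hY0, hW0, hWhi _ (by omega)]
      ring
    · rw [hYhi _ (by omega), hWhi _ (by omega), hWhi _ (by omega)]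
      ring
  have hLdeg : L.degree < ((n + 2 : ℕ) : WithBot ℕ) := by
    rw [Polynomial.degree_lt_iff_coeff_zero]
    intro k hk
    exact hcoeffL k (by exact_mod_cast hk)
  have hinterp := Lagrange.eq_interpolate hx (f := L) (by rw [hn]; exact_mod_cast hLdeg)
  have hcoeff_eq := congrArg (fun p => Polynomial.coeff p (n + 1)) hinterp
  simp only [Lagrange.interpolate_apply, Polynomial.finset_sum_coeff, coeff_C_mul] at hcoeff_eq
  have hbasis : ∀ i ∈ s, (Lagrange.basis s x i).coeff (n + 1) =
      (∏ j ∈ s.erase i, (x i - x j))⁻¹ := by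
    intro i hi
    have := basis_coeff hx hi
    rwa [hn, show n + 2 - 1 = n + 1 by omega] at this
  rw [Finset.sum_congr rfl (fun i hi => by rw [hbasis i hi])] at hcoeff_eq
  have hLeval : ∀ i ∈ s, L.eval (x i) = - (x i * ∏ j ∈ s.erase i, (x i - 1 - x j)) := by
    intro i hi
    rw [hL]
    have hWev : W.eval (x i) = 0 := by
      rw [hW, eval_prod]
      apply Finset.prod_eq_zero hi
      simp
    have hYev : Y.eval (x i) = - ∏ j ∈ s.erase i, (x i - 1 - x j) := by
      rw [hY, eval_prod]
      simp only [eval_sub, eval_X, eval_C]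
      rw [← Finset.mul_prod_erase _ _ hi]
      have : ∏ j ∈ s.erase i, (x i - (x j + 1)) = ∏ j ∈ s.erase i, (x i - 1 - x j) :=
        Finset.prod_congr rfl (fun j _ => by ring)
      rw [this]
      ring
    simp only [eval_sub, eval_mul, eval_X, eval_C, hWev, hYev]
    ring
  rw [Finset.sum_congr rfl (fun i hi => by rw [hLeval i hi])] at hcoeff_eq
  have hLcm : L.coeff (n + 1) = - (∑ j ∈ s, x j) +
      ((n : ℚ) + 2) * ((n : ℚ) + 1) / 2 := by
    rw [hexp, hY2, hW2, hW1, hsumY, hsumY2]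
    ring
  rw [hLcm] at hcoeff_eq
  have hfinal : ∑ r ∈ s, x r * ∏ j ∈ s.erase r, ((x r - 1 - x j) / (x r - x j)) =
      ∑ i ∈ s, -(x i * ∏ j ∈ s.erase i, (x i - 1 - x j)) * (∏ j ∈ s.erase i, (x i - x j))⁻¹ * (-1) := by
    apply Finset.sum_congr rfl
    intro i hi
    rw [Finset.prod_div_distrib]
    field_simp
  rw [hfinal, ← Finset.sum_mul, ← hcoeff_eq]
  rw [hn]
  push_cast
  ring


lemma rowLen_eq_of_iff {μ : YoungDiagram} {i L : ℕ} (h : ∀ j, (i, j) ∈ μ ↔ j < L) :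
    μ.rowLen i = L := by
  rcases Nat.lt_trichotomy (μ.rowLen i) L with hl | he | hg
  · exfalso
    have := (h (μ.rowLen i)).mpr hl
    rw [YoungDiagram.mem_iff_lt_rowLen] at this
    omega
  · exact he
  · exfalso
    have : (i, L) ∈ μ := YoungDiagram.mem_iff_lt_rowLen.mpr hg
    have := (h L).mp this
    omega

lemma mem_cells_iff' {μ : YoungDiagram} {i j : ℕ} : (i, j) ∈ μ.cells ↔ j < μ.rowLen i := by
  rw [YoungDiagram.mem_cells, YoungDiagram.mem_iff_lt_rowLen]

lemma rowLen_pos_iff {μ : YoungDiagram} {i : ℕ} : 0 < μ.rowLen i ↔ i < μ.colLen 0 := by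
  rw [← YoungDiagram.mem_iff_lt_rowLen, YoungDiagram.mem_iff_lt_colLen]

lemma colLen_le_m {μ : YoungDiagram} (j : ℕ) : μ.colLen j ≤ μ.colLen 0 :=
  μ.colLen_anti 0 j (Nat.zero_le j)

lemma card_eq_sum_rowLen (μ : YoungDiagram) {m : ℕ} (hm : μ.colLen 0 ≤ m) :
    μ.card = ∑ i ∈ Finset.range m, μ.rowLen i := by
  rw [show μ.card = μ.cells.card from rfl]
  rw [Finset.card_eq_sum_card_fiberwise (f := Prod.fst) (t := Finset.range m)]
  · apply Finset.sum_congr rfl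
    intro i _
    have : μ.cells.filter (fun c => c.1 = i) = μ.row i := rfl
    rw [this, ← YoungDiagram.rowLen_eq_card]
  · intro c hc
    rw [Finset.mem_coe, Finset.mem_range]
    rw [Finset.mem_coe, YoungDiagram.mem_cells] at hc
    have h1 : c.1 < μ.colLen c.2 := YoungDiagram.mem_iff_lt_colLen.mp (by
      cases c; exact hc)
    have := colLen_le_m (μ := μ) c.2
    omega

/-- Beta numbers for a diagram relative to `m` rows. -/
def bnum (ρ : YoungDiagram) (m i : ℕ) : ℕ := ρ.rowLen i + (m - 1 - i)

lemma bnum_strict_anti {ρ : YoungDiagram} {m i k : ℕ} (hik : i < k) (hk : k < m) :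
    bnum ρ m k < bnum ρ m i := by
  have := ρ.rowLen_anti i k (le_of_lt hik)
  unfold bnum
  omega

/-- Core partition lemma: hooks in row `i` are `{1, …, bᵢ}` minus `{bᵢ - bₖ : k > i}`,
stated as a product identity over naturals. -/
lemma row_hook_prod (ρ : YoungDiagram) {m i : ℕ} (hm : ρ.colLen 0 ≤ m) (hi : i < m) :
    (∏ j ∈ Finset.range (ρ.rowLen i), (ρ.rowLen i + ρ.colLen j - i - j - 1)) *
      (∏ k ∈ Finset.Ioo i m, (bnum ρ m i - bnum ρ m k)) = (bnum ρ m i).factorial := by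
  classical
  set L := ρ.rowLen i with hL
  set B := bnum ρ m i with hB
  have hBval : B = L + (m - 1 - i) := rfl
  -- facts about cells in row i
  have hcol : ∀ j, j < L → i < ρ.colLen j ∧ ρ.colLen j ≤ m := by
    intro j hj
    constructor
    · rw [← YoungDiagram.mem_iff_lt_colLen, YoungDiagram.mem_iff_lt_rowLen]
      exact hj
    · exact le_trans (colLen_le_m j) hm
  set cfun : ℕ → ℕ := fun j => j + (m - ρ.colLen j) with hcfun
  -- cfun strictly monotone on range L
  have hcmono : ∀ j j', j < j' → j' < L → cfun j < cfun j' := by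
    intro j j' hjj hj'
    have h1 := hcol j (by omega)
    have h2 := hcol j' hj'
    have h3 := ρ.colLen_anti j j' (le_of_lt hjj)
    simp only [hcfun]
    omega
  have hcinj : Set.InjOn cfun (Finset.range L) := by
    intro a ha b hb hab
    simp only [Finset.coe_range, Set.mem_Iio] at ha hb
    rcases Nat.lt_trichotomy a b with h | h | h
    · exact absurd hab (Nat.ne_of_lt (hcmono a b h hb))
    · exact h
    · exact absurd hab.symm (Nat.ne_of_lt (hcmono b a h ha))
  have hbinj : Set.InjOn (bnum ρ m) (Finset.Ioo i m) := by
    intro a ha b hb hab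
    simp only [Finset.coe_Ioo, Set.mem_Ioo] at ha hb
    rcases Nat.lt_trichotomy a b with h | h | h
    · exact absurd hab.symm (Nat.ne_of_lt (bnum_strict_anti h hb.2))
    · exact h
    · exact absurd hab (Nat.ne_of_lt (bnum_strict_anti h ha.2))
  set S1 := (Finset.range L).image cfun with hS1
  set S2 := (Finset.Ioo i m).image (bnum ρ m) with hS2
  have hS1sub : S1 ⊆ Finset.range B := by
    intro v hv
    simp only [hS1, Finset.mem_image, Finset.mem_range] at hv ⊢
    obtain ⟨j, hj, rfl⟩ := hv
    have := hcol j hj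
    simp only [hcfun]
    omega
  have hS2sub : S2 ⊆ Finset.range B := by
    intro v hv
    simp only [hS2, Finset.mem_image, Finset.mem_Ioo, Finset.mem_range] at hv ⊢
    obtain ⟨k, hk, rfl⟩ := hv
    exact bnum_strict_anti hk.1 hk.2
  have hdisj : Disjoint S1 S2 := by
    rw [Finset.disjoint_left]
    intro v hv1 hv2
    simp only [hS1, hS2, Finset.mem_image, Finset.mem_range, Finset.mem_Ioo] at hv1 hv2
    obtain ⟨j, hj, rfl⟩ := hv1
    obtain ⟨k, hk, heq⟩ := hv2
    have h1 := hcol j hj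
    have h2 : k < ρ.colLen j ↔ j < ρ.rowLen k := by
      rw [← YoungDiagram.mem_iff_lt_colLen, YoungDiagram.mem_iff_lt_rowLen]
    have h3 := ρ.rowLen_anti i k (le_of_lt hk.1)
    simp only [hcfun, bnum] at heq
    rcases Nat.lt_or_ge k (ρ.colLen j) with h | h
    · have := h2.mp h
      omega
    · have : ¬ (j < ρ.rowLen k) := fun hc => absurd (h2.mpr hc) (by omega)
      omega
  have hcards : S1.card = L ∧ S2.card = m - i - 1 := by
    constructor
    · rw [hS1, Finset.card_image_of_injOn hcinj, Finset.card_range]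
    · rw [hS2, Finset.card_image_of_injOn hbinj, Nat.card_Ioo]
  have hunion : S1 ∪ S2 = Finset.range B := by
    apply Finset.eq_of_subset_of_card_le (Finset.union_subset hS1sub hS2sub)
    rw [Finset.card_union_of_disjoint hdisj, hcards.1, hcards.2, Finset.card_range]
    omega
  -- now the product
  have hprod1 : ∏ j ∈ Finset.range L, (L + ρ.colLen j - i - j - 1) =
      ∏ v ∈ S1, (B - v) := by
    rw [hS1, Finset.prod_image hcinj]
    apply Finset.prod_congr rfl
    intro j hj
    rw [Finset.mem_range] at hj
    have := hcol j hj
    simp only [hcfun, hBval]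
    omega
  have hprod2 : ∏ k ∈ Finset.Ioo i m, (B - bnum ρ m k) = ∏ v ∈ S2, (B - v) := by
    rw [hS2, Finset.prod_image hbinj]
  rw [hprod1, hprod2, ← Finset.prod_union hdisj, hunion]
  -- ∏_{v < B} (B - v) = B!
  rw [← Finset.prod_range_reflect (fun v => B - v) B]
  have : ∀ v ∈ Finset.range B, (fun v => B - v) (B - 1 - v) = v + 1 := by
    intro v hv
    rw [Finset.mem_range] at hv
    show B - (B - 1 - v) = v + 1
    omega
  rw [Finset.prod_congr rfl this]
  rw [Finset.prod_range_add_one_eq_factorial]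


/-- The Vandermonde-type product of the first `m` values of `x`. -/
def Dprod (x : ℕ → ℚ) (m : ℕ) : ℚ := ∏ k ∈ Finset.range m, ∏ i ∈ Finset.range k, (x i - x k)

lemma Dprod_congr {x y : ℕ → ℚ} {m : ℕ} (h : ∀ i < m, x i = y i) : Dprod x m = Dprod y m := by
  unfold Dprod
  apply Finset.prod_congr rfl
  intro k hk
  rw [Finset.mem_range] at hk
  apply Finset.prod_congr rfl
  intro i hi
  rw [Finset.mem_range] at hi
  rw [h i (by omega), h k hk]

lemma Dprod_succ (x : ℕ → ℚ) (m : ℕ) :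
    Dprod x (m + 1) = Dprod x m * ∏ i ∈ Finset.range m, (x i - x m) := by
  unfold Dprod
  rw [Finset.prod_range_succ]

lemma Dprod_update (x : ℕ → ℚ) (v : ℚ) :
    ∀ m r, r < m →
    Dprod x m * ∏ j ∈ (Finset.range m).erase r, (v - x j) =
      Dprod (Function.update x r v) m * ∏ j ∈ (Finset.range m).erase r, (x r - x j) := by
  intro m
  induction m with
  | zero => intro r hr; omega
  | succ m ih =>
    intro r hr
    rcases Nat.lt_or_ge r m with h | h
    · -- r < m
      have herase : (Finset.range (m + 1)).erase r = insert m ((Finset.range m).erase r) := by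
        ext a
        simp only [Finset.mem_erase, Finset.mem_range, Finset.mem_insert]
        omega
      have hm_notmem : m ∉ (Finset.range m).erase r := by simp
      rw [herase, Finset.prod_insert hm_notmem, Finset.prod_insert hm_notmem,
        Dprod_succ, Dprod_succ]
      have hxr : ∀ i < m, Function.update x r v i = Function.update x r v i := fun _ _ => rfl
      have hupm : Function.update x r v m = x m := Function.update_of_ne (by omega) _ _
      have hsplit1 : ∏ i ∈ Finset.range m, (x i - x m) =
          (x r - x m) * ∏ i ∈ (Finset.range m).erase r, (x i - x m) :=
        (Finset.mul_prod_erase _ _ (Finset.mem_range.mpr h)).symm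
      have hsplit2 : ∏ i ∈ Finset.range m, (Function.update x r v i - Function.update x r v m) =
          (v - x m) * ∏ i ∈ (Finset.range m).erase r, (x i - x m) := by
        rw [← Finset.mul_prod_erase _ _ (Finset.mem_range.mpr h), Function.update_self, hupm]
        congr 1
        apply Finset.prod_congr rfl
        intro i hi
        rw [Finset.mem_erase] at hi
        rw [Function.update_of_ne hi.1]
      rw [hsplit1, hsplit2]
      have := ih r h
      linear_combination ((x r - x m) * (v - x m) *
        (∏ i ∈ (Finset.range m).erase r, (x i - x m))) * this
    · -- r = m
      have hrm : m = r := by omega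
      subst hrm
      have herase : (Finset.range (m + 1)).erase m = Finset.range m := by
        ext a
        simp only [Finset.mem_erase, Finset.mem_range]
        omega
      rw [herase, Dprod_succ, Dprod_succ]
      have hDeq : Dprod (Function.update x m v) m = Dprod x m :=
        Dprod_congr (fun i hi => Function.update_of_ne (by omega) _ _)
      rw [hDeq, Function.update_self]
      have hup : ∀ i ∈ Finset.range m, Function.update x m v i = x i := by
        intro i hi
        rw [Finset.mem_range] at hi
        exact Function.update_of_ne (by omega) _ _
      have hprodup : ∏ i ∈ Finset.range m, (Function.update x m v i - v) =
          ∏ i ∈ Finset.range m, (x i - v) :=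
        Finset.prod_congr rfl (fun i hi => by rw [hup i hi])
      rw [hprodup]
      have key : (∏ i ∈ Finset.range m, (x i - x m)) * (∏ j ∈ Finset.range m, (v - x j)) =
          (∏ i ∈ Finset.range m, (x i - v)) * (∏ j ∈ Finset.range m, (x m - x j)) := by
        rw [← Finset.prod_mul_distrib, ← Finset.prod_mul_distrib]
        apply Finset.prod_congr rfl
        intro i _
        ring
      linear_combination (Dprod x m) * key

/-- Frobenius form of the hook product. -/
lemma hookProd_eq_frobenius (ρ : YoungDiagram) {m : ℕ} (hm : ρ.colLen 0 ≤ m) :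
    hookProd ρ * Dprod (fun i => (bnum ρ m i : ℚ)) m =
      ∏ i ∈ Finset.range m, ((bnum ρ m i).factorial : ℚ) := by
  classical
  have key : ∀ i ∈ Finset.range m,
      (∏ j ∈ Finset.range (ρ.rowLen i), ((ρ.rowLen i + ρ.colLen j - i - j - 1 : ℕ) : ℚ)) *
        (∏ k ∈ Finset.Ioo i m, ((bnum ρ m i : ℚ) - (bnum ρ m k : ℚ))) =
      ((bnum ρ m i).factorial : ℚ) := by
    intro i hi
    rw [Finset.mem_range] at hi
    have h := row_hook_prod ρ hm hi
    have := congrArg (Nat.cast : ℕ → ℚ) h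
    push_cast at this
    rw [← this]
    congr 1
    apply Finset.prod_congr rfl
    intro k hk
    rw [Finset.mem_Ioo] at hk
    rw [Nat.cast_sub (le_of_lt (bnum_strict_anti hk.1 hk.2))]
  -- rewrite hookProd as iterated product over rows
  have hrows : hookProd ρ = ∏ i ∈ Finset.range m,
      ∏ j ∈ Finset.range (ρ.rowLen i), ((ρ.rowLen i + ρ.colLen j - i - j - 1 : ℕ) : ℚ) := by
    rw [hookProd]
    rw [← Finset.prod_fiberwise_of_maps_to (g := Prod.fst) (t := Finset.range m)
      (fun c hc => by
        rw [Finset.mem_range]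
        rw [YoungDiagram.mem_cells] at hc
        have h1 : c.1 < ρ.colLen c.2 := YoungDiagram.mem_iff_lt_colLen.mp (by cases c; exact hc)
        have := colLen_le_m (μ := ρ) c.2
        omega)]
    apply Finset.prod_congr rfl
    intro i _
    have hfib : ρ.cells.filter (fun c => c.1 = i) = {i} ×ˢ Finset.range (ρ.rowLen i) := by
      rw [← YoungDiagram.row_eq_prod]
      rfl
    rw [hfib, Finset.prod_product]
    rw [Finset.prod_singleton]
  -- reorder Dprod
  have hD : Dprod (fun i => (bnum ρ m i : ℚ)) m =
      ∏ i ∈ Finset.range m, ∏ k ∈ Finset.Ioo i m, ((bnum ρ m i : ℚ) - (bnum ρ m k : ℚ)) := by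
    unfold Dprod
    rw [Finset.prod_comm' (s' := fun k => Finset.Ioo k m) (t' := Finset.range m)
      (h := fun k i => by
        simp only [Finset.mem_range, Finset.mem_Ioo]
        omega)]
  rw [hrows, hD, ← Finset.prod_mul_distrib]
  exact Finset.prod_congr rfl key


/-- The corner cells of a Young diagram. -/
def corners (ρ : YoungDiagram) : Finset (ℕ × ℕ) :=
  ρ.cells.filter (fun c => (c.1 + 1, c.2) ∉ ρ ∧ (c.1, c.2 + 1) ∉ ρ)

lemma mem_corners {ρ : YoungDiagram} {c : ℕ × ℕ} :
    c ∈ corners ρ ↔ c ∈ ρ ∧ (c.1 + 1, c.2) ∉ ρ ∧ (c.1, c.2 + 1) ∉ ρ := by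
  unfold corners
  rw [Finset.mem_filter, YoungDiagram.mem_cells]

/-- Erasing a corner cell of a Young diagram. -/
def eraseCell (ρ : YoungDiagram) (c : ℕ × ℕ) : YoungDiagram :=
  if h : c ∈ corners ρ then
    ⟨ρ.cells.erase c, by
      intro p q hle hp
      simp only [Finset.coe_erase, Set.mem_diff, Finset.mem_coe, Set.mem_singleton_iff] at hp ⊢
      rw [mem_corners] at h
      have hcell : (p.1, p.2) ∈ ρ := by rw [Prod.mk.eta]; exact (YoungDiagram.mem_cells _).mp hp.1
      have hqmem : (q.1, q.2) ∈ ρ := ρ.up_left_mem hle.1 hle.2 hcell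
      refine ⟨by rw [Prod.mk.eta] at hqmem; exact (YoungDiagram.mem_cells _).mpr hqmem, ?_⟩
      rintro rfl
      have hne : q ≠ p := fun hqp => hp.2 hqp.symm
      have h1 : q.1 ≤ p.1 := hle.1
      have h2 : q.2 ≤ p.2 := hle.2
      rcases Nat.lt_or_ge q.1 p.1 with hlt | hge
      · exact h.2.1 (ρ.up_left_mem (by omega) h2 hcell)
      · have heq1 : q.1 = p.1 := by omega
        have hlt2 : q.2 < p.2 := by
          rcases Nat.lt_or_ge q.2 p.2 with h' | h'
          · exact h'
          · exact absurd (Prod.ext heq1 (by omega)) hne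
        exact h.2.2 (ρ.up_left_mem (by omega) (by omega) hcell)⟩
  else ρ

lemma eraseCell_cells {ρ : YoungDiagram} {c : ℕ × ℕ} (h : c ∈ corners ρ) :
    (eraseCell ρ c).cells = ρ.cells.erase c := by
  rw [eraseCell, dif_pos h]

/-- Rows containing a corner. -/
def cornerRows (ρ : YoungDiagram) : Finset ℕ :=
  (Finset.range (ρ.colLen 0)).filter (fun r => ρ.rowLen (r + 1) < ρ.rowLen r)

lemma mem_cornerRows {ρ : YoungDiagram} {r : ℕ} :
    r ∈ cornerRows ρ ↔ r < ρ.colLen 0 ∧ ρ.rowLen (r + 1) < ρ.rowLen r := by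
  unfold cornerRows
  rw [Finset.mem_filter, Finset.mem_range]

lemma corner_of_cornerRow {ρ : YoungDiagram} {r : ℕ} (hr : r ∈ cornerRows ρ) :
    (r, ρ.rowLen r - 1) ∈ corners ρ := by
  rw [mem_cornerRows] at hr
  have hpos : 0 < ρ.rowLen r := rowLen_pos_iff.mpr hr.1
  rw [mem_corners]
  refine ⟨?_, ?_, ?_⟩
  · rw [YoungDiagram.mem_iff_lt_rowLen]; omega
  · show (r + 1, ρ.rowLen r - 1) ∉ ρ
    rw [YoungDiagram.mem_iff_lt_rowLen]; omega
  · show (r, ρ.rowLen r - 1 + 1) ∉ ρ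
    rw [YoungDiagram.mem_iff_lt_rowLen]; omega

lemma corners_eq_image (ρ : YoungDiagram) :
    corners ρ = (cornerRows ρ).image (fun r => (r, ρ.rowLen r - 1)) := by
  ext ⟨i, j⟩
  simp only [mem_corners, YoungDiagram.mem_iff_lt_rowLen, Finset.mem_image, mem_cornerRows,
    Prod.mk.injEq]
  constructor
  · rintro ⟨h1, h2, h3⟩
    refine ⟨i, ⟨rowLen_pos_iff.mp (by omega), by omega⟩, rfl, by omega⟩
  · rintro ⟨r, ⟨hr1, hr2⟩, rfl, rfl⟩
    have := rowLen_pos_iff.mpr hr1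
    refine ⟨by omega, by omega, by omega⟩

lemma eraseCell_rowLen {ρ : YoungDiagram} {r : ℕ} (hr : r ∈ cornerRows ρ) (i : ℕ) :
    (eraseCell ρ (r, ρ.rowLen r - 1)).rowLen i =
      if i = r then ρ.rowLen r - 1 else ρ.rowLen i := by
  have hc := corner_of_cornerRow hr
  rw [mem_cornerRows] at hr
  have hpos : 0 < ρ.rowLen r := rowLen_pos_iff.mpr hr.1
  apply rowLen_eq_of_iff
  intro j
  rw [← YoungDiagram.mem_cells, eraseCell_cells hc, Finset.mem_erase, YoungDiagram.mem_cells,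
    YoungDiagram.mem_iff_lt_rowLen]
  by_cases hi : i = r
  · subst hi
    rw [if_pos rfl]
    constructor
    · rintro ⟨hne, hlt⟩
      rcases Nat.lt_or_ge j (ρ.rowLen i - 1) with h | h
      · exact h
      · exfalso; exact hne (by rw [Prod.mk.injEq]; omega)
    · intro h
      exact ⟨by rw [Ne, Prod.mk.injEq]; omega, by omega⟩
  · rw [if_neg hi]
    constructor
    · rintro ⟨_, hlt⟩; exact hlt
    · intro h
      exact ⟨by rw [Ne, Prod.mk.injEq]; intro ⟨h1, _⟩; exact hi h1, h⟩

lemma eraseCell_card {ρ : YoungDiagram} {r : ℕ} (hr : r ∈ cornerRows ρ) :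
    (eraseCell ρ (r, ρ.rowLen r - 1)).card = ρ.card - 1 := by
  have hc := corner_of_cornerRow hr
  show (eraseCell ρ (r, ρ.rowLen r - 1)).cells.card = ρ.cells.card - 1
  rw [eraseCell_cells hc, Finset.card_erase_of_mem]
  rw [mem_corners] at hc
  rw [YoungDiagram.mem_cells]
  exact hc.1

lemma eraseCell_colLen0 {ρ : YoungDiagram} {r : ℕ} (hr : r ∈ cornerRows ρ) :
    (eraseCell ρ (r, ρ.rowLen r - 1)).colLen 0 ≤ ρ.colLen 0 := by
  have hc := corner_of_cornerRow hr
  by_contra h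
  push_neg at h
  have h1 : (ρ.colLen 0, 0) ∈ (eraseCell ρ (r, ρ.rowLen r - 1)).cells := by
    rw [YoungDiagram.mem_cells]; exact YoungDiagram.mem_iff_lt_colLen.mpr h
  rw [eraseCell_cells hc] at h1
  have h2 : (ρ.colLen 0, 0) ∈ ρ.cells := Finset.mem_of_mem_erase h1
  rw [YoungDiagram.mem_cells, YoungDiagram.mem_iff_lt_colLen] at h2
  omega

lemma hookProd_pos (ρ : YoungDiagram) : 0 < hookProd ρ := by
  unfold hookProd
  apply Finset.prod_pos
  intro c hc
  rw [YoungDiagram.mem_cells] at hc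
  have h1 : c.2 < ρ.rowLen c.1 := YoungDiagram.mem_iff_lt_rowLen.mp (by cases c; exact hc)
  have h2 : c.1 < ρ.colLen c.2 := YoungDiagram.mem_iff_lt_colLen.mp (by cases c; exact hc)
  have : 0 < ρ.rowLen c.1 + ρ.colLen c.2 - c.1 - c.2 - 1 := by omega
  exact_mod_cast this

lemma Dprod_cast_pos (ρ : YoungDiagram) (m : ℕ) :
    0 < Dprod (fun i => (bnum ρ m i : ℚ)) m := by
  unfold Dprod
  apply Finset.prod_pos
  intro k hk
  rw [Finset.mem_range] at hk
  apply Finset.prod_pos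
  intro i hi
  rw [Finset.mem_range] at hi
  have := bnum_strict_anti (ρ := ρ) (m := m) hi hk
  have : (bnum ρ m k : ℚ) < (bnum ρ m i : ℚ) := by exact_mod_cast this
  linarith

lemma factProd_pos (ρ : YoungDiagram) (m : ℕ) :
    0 < ∏ i ∈ Finset.range m, ((bnum ρ m i).factorial : ℚ) := by
  apply Finset.prod_pos
  intro i _
  exact_mod_cast (bnum ρ m i).factorial_pos

/-- The key recursion for the hook product. -/
lemma hook_recursion (ρ : YoungDiagram) (hpos : 0 < ρ.card) :
    ∑ c ∈ corners ρ, (1 / hookProd (eraseCell ρ c)) = (ρ.card : ℚ) / hookProd ρ := by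
  classical
  set m := ρ.colLen 0 with hm
  have hm1 : 0 < m := by
    obtain ⟨c, hc⟩ := Finset.card_pos.mp (show 0 < ρ.cells.card from hpos)
    have hcell : (c.1, c.2) ∈ ρ := by rw [Prod.mk.eta]; exact (YoungDiagram.mem_cells _).mp hc
    have h00 : (0, 0) ∈ ρ := ρ.up_left_mem (Nat.zero_le _) (Nat.zero_le _) hcell
    exact YoungDiagram.mem_iff_lt_colLen.mp h00
  set x : ℕ → ℚ := fun i => (bnum ρ m i : ℚ) with hx
  have hxinj : Set.InjOn x (Finset.range m) := by
    intro a ha b hb hab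
    simp only [Finset.coe_range, Set.mem_Iio] at ha hb
    simp only [hx] at hab
    have hab' : bnum ρ m a = bnum ρ m b := by exact_mod_cast hab
    rcases Nat.lt_trichotomy a b with h | h | h
    · exact absurd hab' (Nat.ne_of_gt (bnum_strict_anti h hb))
    · exact h
    · exact absurd hab' (Nat.ne_of_lt (bnum_strict_anti h ha))
  set F : ℚ := ∏ i ∈ Finset.range m, ((bnum ρ m i).factorial : ℚ) with hF
  set D : ℚ := Dprod x m with hD
  have hDpos : 0 < D := Dprod_cast_pos ρ m
  have hFpos : 0 < F := factProd_pos ρ m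
  have hhookpos := hookProd_pos ρ
  have hfro : hookProd ρ * D = F := hookProd_eq_frobenius ρ (le_refl m)
  -- per-corner-row formula
  have hper : ∀ r ∈ cornerRows ρ,
      1 / hookProd (eraseCell ρ (r, ρ.rowLen r - 1)) =
        (D / F) * (x r * ∏ j ∈ (Finset.range m).erase r, ((x r - 1 - x j) / (x r - x j))) := by
    intro r hr
    have hrm := (mem_cornerRows.mp hr).1
    have hrowpos : 0 < ρ.rowLen r := rowLen_pos_iff.mpr hrm
    set σ := eraseCell ρ (r, ρ.rowLen r - 1) with hσ
    have hσm : σ.colLen 0 ≤ m := eraseCell_colLen0 hr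
    have hfroσ : hookProd σ * Dprod (fun i => (bnum σ m i : ℚ)) m =
        ∏ i ∈ Finset.range m, ((bnum σ m i).factorial : ℚ) := hookProd_eq_frobenius σ hσm
    have hbσ : ∀ i, bnum σ m i = if i = r then bnum ρ m r - 1 else bnum ρ m i := by
      intro i
      unfold bnum
      rw [eraseCell_rowLen hr i]
      by_cases hi : i = r
      · subst hi; rw [if_pos rfl, if_pos rfl]; omega
      · rw [if_neg hi, if_neg hi]
    have hbnumr_pos : 0 < bnum ρ m r := by unfold bnum; omega
    have hxσ : ∀ i, (bnum σ m i : ℚ) = Function.update x r (x r - 1) i := by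
      intro i
      rw [hbσ i]
      by_cases hi : i = r
      · subst hi
        rw [if_pos rfl, Function.update_self, hx]
        simp only
        rw [Nat.cast_sub hbnumr_pos]
        norm_num
      · rw [if_neg hi, Function.update_of_ne hi]
    have hDσ : Dprod (fun i => (bnum σ m i : ℚ)) m = Dprod (Function.update x r (x r - 1)) m :=
      Dprod_congr (fun i _ => hxσ i)
    have hupd := Dprod_update x (x r - 1) m r hrm
    set Pnum : ℚ := ∏ j ∈ (Finset.range m).erase r, (x r - 1 - x j) with hPnum
    set Pden : ℚ := ∏ j ∈ (Finset.range m).erase r, (x r - x j) with hPden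
    set Dσ : ℚ := Dprod (fun i => (bnum σ m i : ℚ)) m with hDσdef
    set Fσ : ℚ := ∏ i ∈ Finset.range m, ((bnum σ m i).factorial : ℚ) with hFσdef
    have hσDpos : 0 < Dσ := Dprod_cast_pos σ m
    have hσhookpos := hookProd_pos σ
    have hFσpos : 0 < Fσ := factProd_pos σ m
    have hdenom_ne : ∀ j ∈ (Finset.range m).erase r, x r - x j ≠ 0 := by
      intro j hj
      rw [Finset.mem_erase, Finset.mem_range] at hj
      have hne : x j ≠ x r := fun h => hj.1 (hxinj (by simp [hj.2]) (by simp [hm, hrm]) h)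
      intro h
      exact hne (by linarith)
    have hPden_ne : Pden ≠ 0 := Finset.prod_ne_zero_iff.mpr hdenom_ne
    -- (iii) :  D * Pnum = Dσ * Pden
    have hDnum : D * Pnum = Dσ * Pden := by
      rw [hDσ]
      exact hupd
    -- (ii) :  x r * Fσ = F
    have hFσ : x r * Fσ = F := by
      have e1 : Fσ = ((bnum σ m r).factorial : ℚ) *
          ∏ i ∈ (Finset.range m).erase r, ((bnum σ m i).factorial : ℚ) :=
        (Finset.mul_prod_erase _ _ (Finset.mem_range.mpr hrm)).symm
      have e2 : F = ((bnum ρ m r).factorial : ℚ) *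
          ∏ i ∈ (Finset.range m).erase r, ((bnum ρ m i).factorial : ℚ) :=
        (Finset.mul_prod_erase _ _ (Finset.mem_range.mpr hrm)).symm
      have h3 : ∏ i ∈ (Finset.range m).erase r, ((bnum σ m i).factorial : ℚ) =
          ∏ i ∈ (Finset.range m).erase r, ((bnum ρ m i).factorial : ℚ) := by
        apply Finset.prod_congr rfl
        intro i hi
        rw [hbσ i, if_neg (Finset.mem_erase.mp hi).1]
      have h2 : x r * ((bnum σ m r).factorial : ℚ) = ((bnum ρ m r).factorial : ℚ) := by
        rw [hbσ r, if_pos rfl, hx]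
        simp only
        obtain ⟨t, ht⟩ : ∃ t, bnum ρ m r = t + 1 := ⟨bnum ρ m r - 1, by omega⟩
        rw [ht]
        simp only [Nat.add_sub_cancel, Nat.factorial_succ]
        push_cast
        ring
      rw [e1, e2, h3, ← h2]
      ring
    -- (i) : hookProd σ * Dσ = Fσ   (this is hfroσ)
    rw [Finset.prod_div_distrib, ← hPnum, ← hPden]
    field_simp
    linear_combination (-Pden) * hFσ + (-(x r * Pden)) * hfroσ +
      (-(x r * hookProd σ)) * hDnum
  -- assemble the sum
  rw [corners_eq_image ρ]
  rw [Finset.sum_image (fun a _ b _ h => congrArg Prod.fst h)]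
  rw [Finset.sum_congr rfl hper, ← Finset.mul_sum]
  have hsub : cornerRows ρ ⊆ Finset.range m := by
    intro r hr
    exact Finset.mem_range.mpr (mem_cornerRows.mp hr).1
  have hzero : ∀ r ∈ Finset.range m, r ∉ cornerRows ρ →
      x r * ∏ j ∈ (Finset.range m).erase r, ((x r - 1 - x j) / (x r - x j)) = 0 := by
    intro r hrr hnr
    rw [Finset.mem_range] at hrr
    have hrow : ρ.rowLen (r + 1) = ρ.rowLen r := by
      have h1 : ¬ (ρ.rowLen (r + 1) < ρ.rowLen r) := fun h =>
        hnr (mem_cornerRows.mpr ⟨hrr, h⟩)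
      have h2 := ρ.rowLen_anti r (r + 1) (by omega)
      omega
    have hrpos : 0 < ρ.rowLen r := rowLen_pos_iff.mpr hrr
    have hr1m : r + 1 < m := by
      rw [hm, ← rowLen_pos_iff]
      omega
    have hmem : r + 1 ∈ (Finset.range m).erase r := by
      rw [Finset.mem_erase, Finset.mem_range]
      exact ⟨by omega, hr1m⟩
    have hfac : x r - 1 - x (r + 1) = 0 := by
      have hb : bnum ρ m r = bnum ρ m (r + 1) + 1 := by
        unfold bnum
        omega
      rw [hx]
      simp only
      rw [hb]
      push_cast
      ring
    rw [Finset.prod_eq_zero hmem (by rw [hfac]; simp), mul_zero]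
  rw [Finset.sum_subset hsub hzero]
  rw [keyIdentity (Finset.range m) x hxinj]
  -- ∑ x r = card + m(m-1)/2
  have hgauss : (∑ i ∈ Finset.range m, (i : ℚ)) * 2 = (m : ℚ) * ((m : ℚ) - 1) := by
    have h0 := Finset.sum_range_id_mul_two m
    have hc := congrArg (Nat.cast : ℕ → ℚ) h0
    push_cast at hc
    rw [Nat.cast_sub (by omega : 1 ≤ m)] at hc
    push_cast at hc
    exact hc
  have hsum : ∑ r ∈ Finset.range m, x r = (ρ.card : ℚ) + ((m : ℚ) * ((m : ℚ) - 1)) / 2 := by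
    have h1 : ∑ r ∈ Finset.range m, bnum ρ m r =
        ρ.card + ∑ r ∈ Finset.range m, (m - 1 - r) := by
      unfold bnum
      rw [Finset.sum_add_distrib, card_eq_sum_rowLen ρ (le_refl m)]
    have h2 : ∑ r ∈ Finset.range m, (m - 1 - r) = ∑ r ∈ Finset.range m, r :=
      Finset.sum_range_reflect (fun j => j) m
    have h3 : ∑ r ∈ Finset.range m, x r = ((∑ r ∈ Finset.range m, bnum ρ m r : ℕ) : ℚ) := by
      rw [Nat.cast_sum]
    rw [h3, h1, h2]
    push_cast
    linarith [hgauss]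
  rw [Finset.card_range, hsum]
  -- final: (D / F) * (card + m(m-1)/2 - m(m-1)/2) = card / hookProd
  have hhook_ne := ne_of_gt hhookpos
  have hF_ne := ne_of_gt hFpos
  field_simp
  rw [← hfro]
  ring




lemma corners_subset {ρ : YoungDiagram} {c : ℕ × ℕ} (h : c ∈ corners ρ) : c ∈ ρ.cells :=
  Finset.mem_of_mem_filter _ h

lemma eraseCell_card' {ρ : YoungDiagram} {c : ℕ × ℕ} (hc : c ∈ corners ρ) :
    (eraseCell ρ c).card = ρ.card - 1 := by
  show (eraseCell ρ c).cells.card = ρ.cells.card - 1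
  rw [eraseCell_cells hc, Finset.card_erase_of_mem (corners_subset hc)]

/-- Standard Young tableau condition. -/
def STcond (ρ : YoungDiagram) (T : ρ.cells → Fin ρ.card) : Prop :=
  Function.Bijective T ∧
  (∀ a b : ρ.cells, (a : ℕ × ℕ).1 = (b : ℕ × ℕ).1 →
    (a : ℕ × ℕ).2 < (b : ℕ × ℕ).2 → T a < T b) ∧
  (∀ a b : ρ.cells, (a : ℕ × ℕ).2 = (b : ℕ × ℕ).2 →
    (a : ℕ × ℕ).1 < (b : ℕ × ℕ).1 → T a < T b)

noncomputable def NSYT (ρ : YoungDiagram) : ℕ := Nat.card {T : ρ.cells → Fin ρ.card // STcond ρ T}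

lemma mem_eraseCell_cells {ρ : YoungDiagram} {c : ℕ × ℕ} (hc : c ∈ corners ρ)
    {a : ℕ × ℕ} (ha : a ∈ ρ.cells) (hne : a ≠ c) : a ∈ (eraseCell ρ c).cells := by
  rw [eraseCell_cells hc, Finset.mem_erase]
  exact ⟨hne, ha⟩

/-- Insert the maximal entry at corner `c`. -/
noncomputable def insertFun (ρ : YoungDiagram) (c : ℕ × ℕ) (hc : c ∈ corners ρ)
    (hpos : 0 < ρ.card)
    (T' : (eraseCell ρ c).cells → Fin (eraseCell ρ c).card) :
    ρ.cells → Fin ρ.card :=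
  fun a => if h : (a : ℕ × ℕ) = c then ⟨ρ.card - 1, by omega⟩
    else Fin.castLE (by have := eraseCell_card' hc; omega)
      (T' ⟨(a : ℕ × ℕ), mem_eraseCell_cells hc a.2 h⟩)

lemma insertFun_STcond {ρ : YoungDiagram} {c : ℕ × ℕ} (hc : c ∈ corners ρ)
    (hpos : 0 < ρ.card)
    {T' : (eraseCell ρ c).cells → Fin (eraseCell ρ c).card}
    (hT' : STcond (eraseCell ρ c) T') :
    STcond ρ (insertFun ρ c hc hpos T') := by
  classical
  have hcard := eraseCell_card' hc
  have hlt : ∀ (a : ρ.cells) (h : (a : ℕ × ℕ) ≠ c),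
      (insertFun ρ c hc hpos T' a).val < ρ.card - 1 := by
    intro a h
    rw [insertFun, dif_neg h]
    have := (T' ⟨(a : ℕ × ℕ), mem_eraseCell_cells hc a.2 h⟩).isLt
    simp only [Fin.coe_castLE]
    omega
  have htop : ∀ (a : ρ.cells) (h : (a : ℕ × ℕ) = c),
      (insertFun ρ c hc hpos T' a).val = ρ.card - 1 := by
    intro a h
    rw [insertFun, dif_pos h]
  have hval : ∀ (a : ρ.cells) (h : (a : ℕ × ℕ) ≠ c),
      (insertFun ρ c hc hpos T' a).val =
        (T' ⟨(a : ℕ × ℕ), mem_eraseCell_cells hc a.2 h⟩).val := by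
    intro a h
    rw [insertFun, dif_neg h]
    simp
  have hinj : Function.Injective (insertFun ρ c hc hpos T') := by
    intro a b hab
    by_cases ha : (a : ℕ × ℕ) = c
    · by_cases hb : (b : ℕ × ℕ) = c
      · exact Subtype.ext (ha.trans hb.symm)
      · exfalso
        have h1 := htop a ha
        have h2 := hlt b hb
        rw [hab] at h1
        omega
    · by_cases hb : (b : ℕ × ℕ) = c
      · exfalso
        have h1 := htop b hb
        have h2 := hlt a ha
        rw [hab] at h2
        omega
      · have h1 := hval a ha
        have h2 := hval b hb
        rw [hab] at h1
        have heq : T' ⟨(a : ℕ × ℕ), mem_eraseCell_cells hc a.2 ha⟩ =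
            T' ⟨(b : ℕ × ℕ), mem_eraseCell_cells hc b.2 hb⟩ :=
          Fin.ext (h1.symm.trans h2)
        exact Subtype.ext (Subtype.mk_eq_mk.mp (hT'.1.1 heq))
  refine ⟨?_, ?_, ?_⟩
  · rw [Fintype.bijective_iff_injective_and_card]
    refine ⟨hinj, ?_⟩
    rw [Fintype.card_coe, Fintype.card_fin]
  · intro a b h1 h2
    by_cases hb : (b : ℕ × ℕ) = c
    · have ha : (a : ℕ × ℕ) ≠ c := by
        intro h
        rw [h, ← hb] at h2
        omega
      rw [Fin.lt_iff_val_lt_val, htop b hb]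
      have := hlt a ha
      omega
    · by_cases ha : (a : ℕ × ℕ) = c
      · exfalso
        rw [mem_corners] at hc
        apply hc.2.2
        have hbmem : ((b : ℕ × ℕ).1, (b : ℕ × ℕ).2) ∈ ρ := by
          rw [Prod.mk.eta]; exact (YoungDiagram.mem_cells _).mp b.2
        have : ((a : ℕ × ℕ).1, (a : ℕ × ℕ).2 + 1) ∈ ρ :=
          ρ.up_left_mem (le_of_eq h1) (by omega) hbmem
        rw [ha] at this
        exact this
      · rw [Fin.lt_iff_val_lt_val, hval a ha, hval b hb]
        have := hT'.2.1 ⟨(a : ℕ × ℕ), mem_eraseCell_cells hc a.2 ha⟩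
          ⟨(b : ℕ × ℕ), mem_eraseCell_cells hc b.2 hb⟩ h1 h2
        exact this
  · intro a b h1 h2
    by_cases hb : (b : ℕ × ℕ) = c
    · have ha : (a : ℕ × ℕ) ≠ c := by
        intro h
        rw [h, ← hb] at h2
        omega
      rw [Fin.lt_iff_val_lt_val, htop b hb]
      have := hlt a ha
      omega
    · by_cases ha : (a : ℕ × ℕ) = c
      · exfalso
        rw [mem_corners] at hc
        apply hc.2.1
        have hbmem : ((b : ℕ × ℕ).1, (b : ℕ × ℕ).2) ∈ ρ := by
          rw [Prod.mk.eta]; exact (YoungDiagram.mem_cells _).mp b.2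
        have : ((a : ℕ × ℕ).1 + 1, (a : ℕ × ℕ).2) ∈ ρ :=
          ρ.up_left_mem (by omega) (le_of_eq h1) hbmem
        rw [ha] at this
        exact this
      · rw [Fin.lt_iff_val_lt_val, hval a ha, hval b hb]
        have := hT'.2.2 ⟨(a : ℕ × ℕ), mem_eraseCell_cells hc a.2 ha⟩
          ⟨(b : ℕ × ℕ), mem_eraseCell_cells hc b.2 hb⟩ h1 h2
        exact this

namespace Rec

lemma eraseCell_cells_subset {ρ : YoungDiagram} {c : ℕ × ℕ} (hc : c ∈ corners ρ) :
    (eraseCell ρ c).cells ⊆ ρ.cells := by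
  rw [eraseCell_cells hc]
  exact Finset.erase_subset _ _

lemma eraseCell_cells_ne {ρ : YoungDiagram} {c : ℕ × ℕ} (hc : c ∈ corners ρ)
    {a : ℕ × ℕ} (ha : a ∈ (eraseCell ρ c).cells) : a ≠ c := by
  rw [eraseCell_cells hc, Finset.mem_erase] at ha
  exact ha.1

noncomputable def Psi (ρ : YoungDiagram) (hpos : 0 < ρ.card)
    (p : Σ c : {x // x ∈ corners ρ},
      {T : (eraseCell ρ (c : ℕ × ℕ)).cells → Fin ((eraseCell ρ (c : ℕ × ℕ)).card) //
        STcond (eraseCell ρ (c : ℕ × ℕ)) T}) :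
    {T : ρ.cells → Fin ρ.card // STcond ρ T} :=
  ⟨insertFun ρ (p.1 : ℕ × ℕ) p.1.2 hpos p.2.1, insertFun_STcond p.1.2 hpos p.2.2⟩

lemma Psi_injective (ρ : YoungDiagram) (hpos : 0 < ρ.card) :
    Function.Injective (Psi ρ hpos) := by
  classical
  rintro ⟨⟨c, hc⟩, ⟨T', hT'⟩⟩ ⟨⟨d, hd⟩, ⟨S', hS'⟩⟩ h
  have h0 : insertFun ρ c hc hpos T' = insertFun ρ d hd hpos S' :=
    congrArg Subtype.val h
  have hcd : c = d := by
    by_contra hne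
    have h1 := congrFun h0 ⟨c, corners_subset hc⟩
    rw [insertFun, insertFun] at h1
    rw [dif_pos rfl, dif_neg hne] at h1
    have h2 := congrArg Fin.val h1
    simp only [Fin.coe_castLE] at h2
    have h3 := (S' ⟨c, mem_eraseCell_cells hd (corners_subset hc) hne⟩).isLt
    have h4 := eraseCell_card' hd
    omega
  subst hcd
  have hTS : T' = S' := by
    funext a
    have hane : (a : ℕ × ℕ) ≠ c := eraseCell_cells_ne hc a.2
    have hmem : (a : ℕ × ℕ) ∈ ρ.cells := eraseCell_cells_subset hc a.2
    have h1 := congrFun h0 ⟨(a : ℕ × ℕ), hmem⟩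
    rw [insertFun, insertFun] at h1
    rw [dif_neg hane, dif_neg hane] at h1
    have h2 := congrArg Fin.val h1
    simp only [Fin.coe_castLE] at h2
    have hsub : (⟨(a : ℕ × ℕ), mem_eraseCell_cells hc hmem hane⟩ :
        (eraseCell ρ c).cells) = a := Subtype.ext rfl
    rw [hsub] at h2
    exact Fin.ext h2
  subst hTS
  rfl

lemma Psi_surjective (ρ : YoungDiagram) (hpos : 0 < ρ.card) :
    Function.Surjective (Psi ρ hpos) := by
  classical
  rintro ⟨T, hT⟩
  obtain ⟨a₀, ha₀⟩ := hT.1.2 ⟨ρ.card - 1, by omega⟩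
  have htopval : (T a₀).val = ρ.card - 1 := by rw [ha₀]
  have hbound : ∀ b : ρ.cells, (T b).val ≤ ρ.card - 1 := by
    intro b
    have := (T b).isLt
    omega
  have hc : (a₀ : ℕ × ℕ) ∈ corners ρ := by
    rw [mem_corners]
    refine ⟨(YoungDiagram.mem_cells _).mp a₀.2, ?_, ?_⟩
    · intro hmem
      have hlt := hT.2.2 a₀ ⟨((a₀ : ℕ × ℕ).1 + 1, (a₀ : ℕ × ℕ).2),
        (YoungDiagram.mem_cells _).mpr hmem⟩ rfl (by simp)
      rw [Fin.lt_iff_val_lt_val, htopval] at hlt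
      have := hbound ⟨((a₀ : ℕ × ℕ).1 + 1, (a₀ : ℕ × ℕ).2), (YoungDiagram.mem_cells _).mpr hmem⟩
      omega
    · intro hmem
      have hlt := hT.2.1 a₀ ⟨((a₀ : ℕ × ℕ).1, (a₀ : ℕ × ℕ).2 + 1),
        (YoungDiagram.mem_cells _).mpr hmem⟩ rfl (by simp)
      rw [Fin.lt_iff_val_lt_val, htopval] at hlt
      have := hbound ⟨((a₀ : ℕ × ℕ).1, (a₀ : ℕ × ℕ).2 + 1), (YoungDiagram.mem_cells _).mpr hmem⟩
      omega
  have hcard := eraseCell_card' hc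
  have hvalsmall : ∀ a : (eraseCell ρ (a₀ : ℕ × ℕ)).cells,
      (T ⟨(a : ℕ × ℕ), eraseCell_cells_subset hc a.2⟩).val < (eraseCell ρ (a₀ : ℕ × ℕ)).card := by
    intro a
    have hane : (a : ℕ × ℕ) ≠ (a₀ : ℕ × ℕ) := eraseCell_cells_ne hc a.2
    have hne : T ⟨(a : ℕ × ℕ), eraseCell_cells_subset hc a.2⟩ ≠ T a₀ := by
      intro heq
      have := hT.1.1 heq
      exact hane (congrArg Subtype.val this)
    have h1 : (T ⟨(a : ℕ × ℕ), eraseCell_cells_subset hc a.2⟩).val ≠ ρ.card - 1 := by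
      intro hval
      apply hne
      apply Fin.ext
      rw [hval, htopval]
    have := hbound ⟨(a : ℕ × ℕ), eraseCell_cells_subset hc a.2⟩
    omega
  set T' : (eraseCell ρ (a₀ : ℕ × ℕ)).cells → Fin ((eraseCell ρ (a₀ : ℕ × ℕ)).card) :=
    fun a => ⟨(T ⟨(a : ℕ × ℕ), eraseCell_cells_subset hc a.2⟩).val, hvalsmall a⟩ with hT'def
  have hT' : STcond (eraseCell ρ (a₀ : ℕ × ℕ)) T' := by
    refine ⟨?_, ?_, ?_⟩
    · rw [Fintype.bijective_iff_injective_and_card]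
      constructor
      · intro a b hab
        have h2 := congrArg Fin.val hab
        simp only [hT'def] at h2
        have h3 : T ⟨(a : ℕ × ℕ), eraseCell_cells_subset hc a.2⟩ =
            T ⟨(b : ℕ × ℕ), eraseCell_cells_subset hc b.2⟩ := Fin.ext h2
        have := hT.1.1 h3
        exact Subtype.ext (Subtype.mk_eq_mk.mp this)
      · rw [Fintype.card_coe, Fintype.card_fin]
    · intro a b h1 h2
      have := hT.2.1 ⟨(a : ℕ × ℕ), eraseCell_cells_subset hc a.2⟩
        ⟨(b : ℕ × ℕ), eraseCell_cells_subset hc b.2⟩ h1 h2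
      rw [Fin.lt_iff_val_lt_val] at this ⊢
      exact this
    · intro a b h1 h2
      have := hT.2.2 ⟨(a : ℕ × ℕ), eraseCell_cells_subset hc a.2⟩
        ⟨(b : ℕ × ℕ), eraseCell_cells_subset hc b.2⟩ h1 h2
      rw [Fin.lt_iff_val_lt_val] at this ⊢
      exact this
  refine ⟨⟨⟨(a₀ : ℕ × ℕ), hc⟩, ⟨T', hT'⟩⟩, ?_⟩
  apply Subtype.ext
  funext b
  show insertFun ρ (a₀ : ℕ × ℕ) hc hpos T' b = T b
  rw [insertFun]
  by_cases hb : (b : ℕ × ℕ) = (a₀ : ℕ × ℕ)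
  · rw [dif_pos hb]
    have hba : b = a₀ := Subtype.ext hb
    subst hba
    apply Fin.ext
    rw [htopval]
  · rw [dif_neg hb]
    apply Fin.ext
    simp only [Fin.coe_castLE, hT'def]

lemma NSYT_rec (ρ : YoungDiagram) (hpos : 0 < ρ.card) :
    NSYT ρ = ∑ c ∈ corners ρ, NSYT (eraseCell ρ c) := by
  classical
  have hbij : Function.Bijective (Psi ρ hpos) := ⟨Psi_injective ρ hpos, Psi_surjective ρ hpos⟩
  have h1 := Nat.card_eq_of_bijective _ hbij
  rw [NSYT, ← h1, Nat.card_eq_fintype_card, Fintype.card_sigma]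
  rw [← Finset.sum_coe_sort (corners ρ) (fun c => NSYT (eraseCell ρ c))]
  apply Finset.sum_congr rfl
  intro c _
  rw [NSYT, Nat.card_eq_fintype_card]

end Rec


lemma NSYT_zero (ρ : YoungDiagram) (h : ρ.card = 0) : NSYT ρ = 1 := by
  classical
  have hcells : ρ.cells = ∅ := Finset.card_eq_zero.mp h
  haveI : IsEmpty ρ.cells := Finset.isEmpty_coe_sort.mpr hcells
  rw [NSYT, Nat.card_eq_one_iff_unique]
  constructor
  · constructor
    intro a b
    exact Subtype.ext (funext fun x => isEmptyElim x)
  · refine ⟨⟨fun a => isEmptyElim a, ?_, fun a => isEmptyElim a, fun a => isEmptyElim a⟩⟩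
    constructor
    · intro a; exact isEmptyElim a
    · intro y
      exact absurd y.isLt (by omega)

lemma hookProd_zero (ρ : YoungDiagram) (h : ρ.card = 0) : hookProd ρ = 1 := by
  have hcells : ρ.cells = ∅ := Finset.card_eq_zero.mp h
  rw [hookProd, hcells, Finset.prod_empty]

lemma main_aux : ∀ n (ρ : YoungDiagram), ρ.card = n →
    (NSYT ρ : ℚ) = (ρ.card.factorial : ℚ) / hookProd ρ := by
  intro n
  induction n using Nat.strong_induction_on with
  | _ n ih =>
    intro ρ hn
    rcases Nat.eq_zero_or_pos ρ.card with h0 | hpos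
    · rw [NSYT_zero ρ h0, hookProd_zero ρ h0, h0]
      simp [Nat.factorial]
    · rw [Rec.NSYT_rec ρ hpos]
      push_cast
      have hih : ∀ c ∈ corners ρ, (NSYT (eraseCell ρ c) : ℚ) =
          (((ρ.card - 1).factorial : ℕ) : ℚ) / hookProd (eraseCell ρ c) := by
        intro c hcm
        have := ih (ρ.card - 1) (by omega) (eraseCell ρ c) (eraseCell_card' hcm)
        rw [this, eraseCell_card' hcm]
      rw [Finset.sum_congr rfl hih]
      have hmul : ∑ c ∈ corners ρ, (((ρ.card - 1).factorial : ℕ) : ℚ) / hookProd (eraseCell ρ c)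
          = (((ρ.card - 1).factorial : ℕ) : ℚ) *
            ∑ c ∈ corners ρ, 1 / hookProd (eraseCell ρ c) := by
        rw [Finset.mul_sum]
        apply Finset.sum_congr rfl
        intro c _
        ring
      rw [hmul, hook_recursion ρ hpos]
      have hfact : (ρ.card.factorial : ℚ) = (ρ.card : ℚ) * (((ρ.card - 1).factorial : ℕ) : ℚ) := by
        obtain ⟨t, ht⟩ : ∃ t, ρ.card = t + 1 := ⟨ρ.card - 1, by omega⟩
        rw [ht]
        simp only [Nat.add_sub_cancel, Nat.factorial_succ]
        push_cast
        ring
      rw [hfact]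
      ring

end HookAux

/-- The hook length formula: the number of standard Young tableaux of shape `ρ`
equals `|ρ|! / h(ρ)`. -/
theorem hook_length_formula (ρ : YoungDiagram) :
    (Nat.card {T : ρ.cells → Fin ρ.card //
        Function.Bijective T ∧
        (∀ a b : ρ.cells, (a : ℕ × ℕ).1 = (b : ℕ × ℕ).1 →
          (a : ℕ × ℕ).2 < (b : ℕ × ℕ).2 → T a < T b) ∧
        (∀ a b : ρ.cells, (a : ℕ × ℕ).2 = (b : ℕ × ℕ).2 →
          (a : ℕ × ℕ).1 < (b : ℕ × ℕ).1 → T a < T b)} : ℚ) =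
      (ρ.card.factorial : ℚ) / hookProd ρ := by
  exact main_aux ρ.card ρ rfl

end ChernTensor
end
end

section
/- For positive integers ℓ, m: P_{(1^ℓ),(1^m)}(e,f) = C(e+m−1, m−1)·C(f+ℓ−1, ℓ−1)·(ef − ℓm)/(ℓm), where P is defined by the LR-coefficient sum formula applied to column partitions. -/
open scoped Classical BigOperators
noncomputable section

namespace ChernTensor

/-- Hook diagram: first column of length `r`, first row of length `c`. -/
def hk (r c : ℕ) : YoungDiagram :=
  ⟨(Finset.range r ×ˢ {0}) ∪ ({0} ×ˢ Finset.range c), by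
    intro p q hle hp
    simp only [Finset.coe_union, Finset.coe_product, Set.mem_union, Set.mem_prod,
      Finset.mem_coe, Finset.mem_range, Finset.mem_singleton, Finset.coe_singleton,
      Set.mem_singleton_iff] at hp ⊢
    obtain ⟨ha, hb⟩ := hle
    omega⟩

lemma mem_hk {r c i j : ℕ} : (i, j) ∈ hk r c ↔ (j = 0 ∧ i < r) ∨ (i = 0 ∧ j < c) := by
  rw [← YoungDiagram.mem_cells]
  simp only [hk, YoungDiagram.mem_mk, Finset.mem_union, Finset.mem_product, Finset.mem_range,
    Finset.mem_singleton]
  tauto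

lemma mem_hk' {r c : ℕ} {p : ℕ × ℕ} :
    p ∈ hk r c ↔ (p.2 = 0 ∧ p.1 < r) ∨ (p.1 = 0 ∧ p.2 < c) := by
  obtain ⟨i, j⟩ := p; exact mem_hk

lemma hk_transpose (r c : ℕ) : (hk r c).transpose = hk c r := by
  ext ⟨i, j⟩
  rw [YoungDiagram.mem_cells, YoungDiagram.mem_transpose]
  show (j, i) ∈ hk r c ↔ _
  rw [YoungDiagram.mem_cells, mem_hk, mem_hk]
  tauto

lemma mem_rect {r c i j : ℕ} : (i, j) ∈ rect r c ↔ i < r ∧ j < c := by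
  rw [← YoungDiagram.mem_cells]
  simp only [rect, YoungDiagram.mem_mk, Finset.mem_product, Finset.mem_range]

lemma rect_eq_hk {ℓ : ℕ} (hl : 0 < ℓ) : rect ℓ 1 = hk ℓ 1 := by
  ext ⟨i, j⟩
  rw [YoungDiagram.mem_cells, YoungDiagram.mem_cells, mem_rect, mem_hk]
  omega

lemma rowLen_eq {μ : YoungDiagram} {i n : ℕ} (h1 : ∀ j < n, (i, j) ∈ μ) (h2 : (i, n) ∉ μ) :
    μ.rowLen i = n := by
  refine le_antisymm ?_ ?_
  · by_contra h
    exact h2 (YoungDiagram.mem_iff_lt_rowLen.mpr (by omega))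
  · rcases Nat.eq_zero_or_pos n with h | h
    · omega
    · have := YoungDiagram.mem_iff_lt_rowLen.mp (h1 (n - 1) (by omega))
      omega

lemma hk_rowLen_zero {r c : ℕ} (hr : 0 < r) (hc : 0 < c) : (hk r c).rowLen 0 = c :=
  rowLen_eq (fun j hj => mem_hk.mpr (Or.inr ⟨rfl, hj⟩)) (by rw [mem_hk]; omega)

lemma hk_rowLen_pos {r c : ℕ} (hc : 0 < c) {i : ℕ} (hi : 0 < i) :
    (hk r c).rowLen i = if i < r then 1 else 0 := by
  split
  · exact rowLen_eq (fun j hj => mem_hk.mpr (Or.inl ⟨by omega, by assumption⟩))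
      (by rw [mem_hk]; omega)
  · exact rowLen_eq (fun j hj => by omega) (by rw [mem_hk]; omega)

lemma hk_colLen_zero {r c : ℕ} (hr : 0 < r) (hc : 0 < c) : (hk r c).colLen 0 = r := by
  rw [← YoungDiagram.rowLen_transpose, hk_transpose, hk_rowLen_zero hc hr]

lemma hk_colLen_pos {r c : ℕ} (hr : 0 < r) {j : ℕ} (hj : 0 < j) :
    (hk r c).colLen j = if j < c then 1 else 0 := by
  rw [← YoungDiagram.rowLen_transpose, hk_transpose, hk_rowLen_pos hr hj]

lemma hk_le_hk {r c r' c' : ℕ} (hr : r ≤ r') (hc : c ≤ c') : hk r c ≤ hk r' c' := by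
  intro p hp
  rw [mem_hk'] at hp ⊢
  omega

lemma hk_ne_hk {r c r' c' : ℕ} (hr : 0 < r) (hr' : 0 < r') (hc0 : 0 < c) (hc0' : 0 < c')
    (hc : c ≠ c') : hk r c ≠ hk r' c' := by
  intro h
  have h1 : (hk r c).rowLen 0 = (hk r' c').rowLen 0 := by rw [h]
  rw [hk_rowLen_zero hr hc0, hk_rowLen_zero hr' hc0'] at h1
  omega
lemma col_rowLen {m : ℕ} (hm : 0 < m) (k : ℕ) :
    (hk m 1).rowLen k = if k < m then 1 else 0 := by
  rcases Nat.eq_zero_or_pos k with rfl | hkpos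
  · rw [hk_rowLen_zero hm one_pos]; simp [hm]
  · exact hk_rowLen_pos one_pos hkpos

/-- Explicit LR tableau of shape `hk m (ℓ+1) / hk 1 ℓ`. -/
def T1 (ℓ m : ℕ) : ℕ × ℕ → ℕ := fun c =>
  if c.1 = 0 ∧ c.2 = ℓ then 1 else if c.2 = 0 ∧ 1 ≤ c.1 ∧ c.1 < m then c.1 + 1 else 0

/-- Explicit LR tableau of shape `hk (m+1) ℓ / hk 1 ℓ`. -/
def T2 (m : ℕ) : ℕ × ℕ → ℕ := fun c =>
  if c.2 = 0 ∧ 1 ≤ c.1 ∧ c.1 ≤ m then c.1 else 0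

lemma mem_S1 {ℓ m : ℕ} (hl : 0 < ℓ) (hm : 0 < m) (p : ℕ × ℕ) :
    p ∈ (hk m (ℓ+1)).cells \ (hk 1 ℓ).cells ↔
      (p.1 = 0 ∧ p.2 = ℓ) ∨ (p.2 = 0 ∧ 1 ≤ p.1 ∧ p.1 < m) := by
  rw [Finset.mem_sdiff, YoungDiagram.mem_cells, YoungDiagram.mem_cells, mem_hk', mem_hk']
  omega

lemma mem_S2 {ℓ m : ℕ} (hl : 0 < ℓ) (hm : 0 < m) (p : ℕ × ℕ) :
    p ∈ (hk (m+1) ℓ).cells \ (hk 1 ℓ).cells ↔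
      p.2 = 0 ∧ 1 ≤ p.1 ∧ p.1 ≤ m := by
  rw [Finset.mem_sdiff, YoungDiagram.mem_cells, YoungDiagram.mem_cells, mem_hk', mem_hk']
  omega

/-- Helper: the lattice condition follows from a "predecessor in an earlier row"
property plus multiplicity bounds. -/
lemma lattice_of {S : Finset (ℕ × ℕ)} {T : ℕ × ℕ → ℕ}
    (hcard : ∀ k : ℕ, (S.filter fun c => T c = k + 2).card ≤ 1)
    (hpred : ∀ c ∈ S, ∀ k : ℕ, T c = k + 2 → ∃ d ∈ S, T d = k + 1 ∧ d.1 < c.1) :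
    ∀ c ∈ S, ∀ k : ℕ,
      ((S.filter fun d => (d.1 < c.1 ∨ (d.1 = c.1 ∧ c.2 ≤ d.2)) ∧ T d = k + 2).card ≤
       (S.filter fun d => (d.1 < c.1 ∨ (d.1 = c.1 ∧ c.2 ≤ d.2)) ∧ T d = k + 1).card) := by
  intro c hc k
  rcases Finset.eq_empty_or_nonempty
      (S.filter fun d => (d.1 < c.1 ∨ (d.1 = c.1 ∧ c.2 ≤ d.2)) ∧ T d = k + 2) with h | h
  · rw [h]; simp
  · obtain ⟨x, hx⟩ := h
    obtain ⟨hxS, hxreg, hxv⟩ := Finset.mem_filter.mp hx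
    obtain ⟨d, hdS, hdv, hdlt⟩ := hpred x hxS k hxv
    have hdreg : d.1 < c.1 ∨ (d.1 = c.1 ∧ c.2 ≤ d.2) := by
      left; rcases hxreg with h | h <;> omega
    have hd : d ∈ S.filter fun d => (d.1 < c.1 ∨ (d.1 = c.1 ∧ c.2 ≤ d.2)) ∧ T d = k + 1 :=
      Finset.mem_filter.mpr ⟨hdS, hdreg, hdv⟩
    have h1 : 1 ≤ (S.filter fun d => (d.1 < c.1 ∨ (d.1 = c.1 ∧ c.2 ≤ d.2)) ∧ T d = k + 1).card :=
      Finset.card_pos.mpr ⟨d, hd⟩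
    have h2 : (S.filter fun d => (d.1 < c.1 ∨ (d.1 = c.1 ∧ c.2 ≤ d.2)) ∧ T d = k + 2).card ≤
        (S.filter fun c => T c = k + 2).card :=
      Finset.card_le_card (fun y hy => by
        obtain ⟨hyS, _, hyv⟩ := Finset.mem_filter.mp hy
        exact Finset.mem_filter.mpr ⟨hyS, hyv⟩)
    exact le_trans h2 (le_trans (hcard k) h1)

lemma T1_content {ℓ m : ℕ} (hl : 0 < ℓ) (hm : 0 < m) (k : ℕ) :
    (((hk m (ℓ+1)).cells \ (hk 1 ℓ).cells).filter fun c => T1 ℓ m c = k + 1).card =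
      if k < m then 1 else 0 := by
  split_ifs with hkm
  · rcases Nat.eq_zero_or_pos k with rfl | hkpos
    · rw [show ((hk m (ℓ+1)).cells \ (hk 1 ℓ).cells).filter (fun c => T1 ℓ m c = 0 + 1) =
          {((0 : ℕ), ℓ)} from ?_]
      · exact Finset.card_singleton _
      · ext p
        rw [Finset.mem_filter, mem_S1 hl hm, Finset.mem_singleton, Prod.ext_iff]
        simp only [T1]
        split_ifs with h1 h2 <;> first | exact not_false | omega
    · rw [show ((hk m (ℓ+1)).cells \ (hk 1 ℓ).cells).filter (fun c => T1 ℓ m c = k + 1) =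
          {((k : ℕ), (0 : ℕ))} from ?_]
      · exact Finset.card_singleton _
      · ext p
        rw [Finset.mem_filter, mem_S1 hl hm, Finset.mem_singleton, Prod.ext_iff]
        simp only [T1]
        split_ifs with h1 h2 <;> first | exact not_false | omega
  · rw [Finset.card_eq_zero, Finset.filter_eq_empty_iff]
    intro p hp
    rw [mem_S1 hl hm] at hp
    simp only [T1]
    split_ifs with h1 h2 <;> omega

lemma isLR_T1 {ℓ m : ℕ} (hl : 0 < ℓ) (hm : 0 < m) :
    IsLRTableau (hk 1 ℓ) (hk m 1) (hk m (ℓ+1)) (T1 ℓ m) := by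
  refine ⟨?_, ?_, ?_, ?_, ?_⟩
  · intro c
    rw [mem_S1 hl hm]
    constructor
    · intro h
      simp only [T1, ne_eq]
      split_ifs with h1 h2 <;> first | exact not_false | omega
    · intro h
      simp only [T1, ne_eq] at h
      split_ifs at h with h1 h2 <;> omega
  · intro i j j' hj hmem hmem'
    rw [mem_S1 hl hm] at hmem hmem'
    simp only [Prod.fst, Prod.snd] at hmem hmem'
    have : j = j' := by omega
    subst this; exact le_refl _
  · intro i i' j hii hmem hmem'
    rw [mem_S1 hl hm] at hmem hmem'
    simp only [T1]
    split_ifs <;> simp_all <;> omega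
  · intro k
    rw [T1_content hl hm k, col_rowLen hm]
  · refine lattice_of (fun k => ?_) (fun c hc k hck => ?_)
    · rw [T1_content hl hm (k+1)]
      split_ifs <;> omega
    · rw [mem_S1 hl hm] at hc
      have hcv : c.2 = 0 ∧ 1 ≤ c.1 ∧ c.1 < m ∧ c.1 = k + 1 := by
        simp only [T1] at hck
        split_ifs at hck <;> omega
    
      rcases Nat.eq_zero_or_pos k with rfl | hkpos
      · refine ⟨(0, ℓ), ?_, ?_, by omega⟩
        · rw [mem_S1 hl hm]; left; exact ⟨rfl, rfl⟩
        · simp [T1]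
      · refine ⟨(k, 0), ?_, ?_, by omega⟩
        · rw [mem_S1 hl hm]; right; exact ⟨rfl, by omega, by omega⟩
        · show (if k = 0 ∧ (0:ℕ) = ℓ then 1 else
            if (0:ℕ) = 0 ∧ 1 ≤ k ∧ k < m then k + 1 else 0) = k + 1
          rw [if_neg (by omega), if_pos ⟨rfl, by omega, by omega⟩]

lemma T2_content {ℓ m : ℕ} (hl : 0 < ℓ) (hm : 0 < m) (k : ℕ) :
    (((hk (m+1) ℓ).cells \ (hk 1 ℓ).cells).filter fun c => T2 m c = k + 1).card =
      if k < m then 1 else 0 := by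
  split_ifs with hkm
  · rw [show ((hk (m+1) ℓ).cells \ (hk 1 ℓ).cells).filter (fun c => T2 m c = k + 1) =
        {((k+1 : ℕ), (0 : ℕ))} from ?_]
    · exact Finset.card_singleton _
    · ext p
      rw [Finset.mem_filter, mem_S2 hl hm, Finset.mem_singleton, Prod.ext_iff]
      simp only [T2]
      split_ifs with h1 <;> first | exact not_false | omega
  · rw [Finset.card_eq_zero, Finset.filter_eq_empty_iff]
    intro p hp
    rw [mem_S2 hl hm] at hp
    simp only [T2]
    split_ifs with h1 <;> omega

lemma isLR_T2 {ℓ m : ℕ} (hl : 0 < ℓ) (hm : 0 < m) :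
    IsLRTableau (hk 1 ℓ) (hk m 1) (hk (m+1) ℓ) (T2 m) := by
  refine ⟨?_, ?_, ?_, ?_, ?_⟩
  · intro c
    rw [mem_S2 hl hm]
    constructor
    · intro h
      simp only [T2, ne_eq]
      split_ifs with h1 <;> first | exact not_false | omega
    · intro h
      simp only [T2, ne_eq] at h
      split_ifs at h with h1 <;> omega
  · intro i j j' hj hmem hmem'
    rw [mem_S2 hl hm] at hmem hmem'
    have : j = j' := by omega
    subst this; exact le_refl _
  · intro i i' j hii hmem hmem'
    rw [mem_S2 hl hm] at hmem hmem'
    simp only [T2]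
    split_ifs <;> simp_all <;> omega
  · intro k
    rw [T2_content hl hm k, col_rowLen hm]
  · refine lattice_of (fun k => ?_) (fun c hc k hck => ?_)
    · rw [T2_content hl hm (k+1)]
      split_ifs <;> omega
    · rw [mem_S2 hl hm] at hc
      have hcv : c.2 = 0 ∧ 1 ≤ c.1 ∧ c.1 ≤ m ∧ c.1 = k + 2 := by
        simp only [T2] at hck
        split_ifs at hck <;> omega
      refine ⟨(k+1, 0), ?_, ?_, by omega⟩
      · rw [mem_S2 hl hm]; exact ⟨rfl, by omega, by omega⟩
      · show (if (0:ℕ) = 0 ∧ 1 ≤ k + 1 ∧ k + 1 ≤ m then k + 1 else 0) = k + 1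
        rw [if_pos ⟨rfl, by omega, by omega⟩]
lemma main_structure {ℓ m : ℕ} (hl : 0 < ℓ) (hm : 0 < m) {σ : YoungDiagram} {T : ℕ × ℕ → ℕ}
    (hle : hk 1 ℓ ≤ σ) (hT : IsLRTableau (hk 1 ℓ) (hk m 1) σ T) :
    (σ = hk m (ℓ + 1) ∧ T = T1 ℓ m) ∨ (σ = hk (m + 1) ℓ ∧ T = T2 m) := by
  obtain ⟨h1, h2, h3, h4, h5⟩ := hT
  set S := σ.cells \ (hk 1 ℓ).cells with hS
  have hmemS : ∀ p : ℕ × ℕ, p ∈ S ↔ p ∈ σ ∧ ¬((p.2 = 0 ∧ p.1 < 1) ∨ (p.1 = 0 ∧ p.2 < ℓ)) := by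
    intro p
    rw [hS, Finset.mem_sdiff, YoungDiagram.mem_cells, YoungDiagram.mem_cells, mem_hk']
  have h4' : ∀ k, (S.filter fun c => T c = k + 1).card = if k < m then 1 else 0 := by
    intro k; rw [h4 k, col_rowLen hm]
  have hval : ∀ c ∈ S, 1 ≤ T c ∧ T c ≤ m := by
    intro c hc
    have h0 : T c ≠ 0 := (h1 c).mp hc
    refine ⟨by omega, ?_⟩
    by_contra hgt
    have he := h4' (T c - 1)
    rw [if_neg (by omega), Finset.card_eq_zero] at he
    have hcf : c ∈ S.filter fun d => T d = (T c - 1) + 1 :=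
      Finset.mem_filter.mpr ⟨hc, by omega⟩
    rw [he] at hcf
    exact absurd hcf (Finset.notMem_empty c)
  have huniq : ∀ c ∈ S, ∀ c' ∈ S, T c = T c' → c = c' := by
    intro c hc c' hc' he
    have hv := hval c hc
    have hcard := h4' (T c - 1)
    rw [if_pos (by omega)] at hcard
    exact Finset.card_le_one.mp (le_of_eq hcard) c
      (Finset.mem_filter.mpr ⟨hc, by omega⟩) c' (Finset.mem_filter.mpr ⟨hc', by omega⟩)
  have hex : ∀ k, k < m → ∃ c ∈ S, T c = k + 1 := by
    intro k hkm
    have hcard := h4' k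
    rw [if_pos hkm] at hcard
    obtain ⟨c, hc⟩ := Finset.card_eq_one.mp hcard
    have hcf : c ∈ S.filter fun d => T d = k + 1 := by
      rw [hc]; exact Finset.mem_singleton_self c
    exact ⟨c, (Finset.mem_filter.mp hcf).1, (Finset.mem_filter.mp hcf).2⟩
  have hpred : ∀ c ∈ S, 2 ≤ T c → ∃ d ∈ S, T d = T c - 1 ∧ d.1 < c.1 := by
    intro c hc h2c
    have hlat := h5 c hc (T c - 2)
    have hcmem : c ∈ S.filter fun d =>
        (d.1 < c.1 ∨ (d.1 = c.1 ∧ c.2 ≤ d.2)) ∧ T d = (T c - 2) + 2 :=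
      Finset.mem_filter.mpr ⟨hc, Or.inr ⟨rfl, le_refl _⟩, by omega⟩
    have hpos : 0 < (S.filter fun d =>
        (d.1 < c.1 ∨ (d.1 = c.1 ∧ c.2 ≤ d.2)) ∧ T d = (T c - 2) + 1).card :=
      lt_of_lt_of_le (Finset.card_pos.mpr ⟨c, hcmem⟩) hlat
    obtain ⟨d, hd⟩ := Finset.card_pos.mp hpos
    obtain ⟨hdS, hreg, hdv⟩ := Finset.mem_filter.mp hd
    refine ⟨d, hdS, by omega, ?_⟩
    rcases hreg with h | ⟨hr, hcol⟩
    · exact h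
    · exfalso
      have e1 : ((c.1, c.2) : ℕ × ℕ) = c := Prod.mk.eta
      have e2 : ((c.1, d.2) : ℕ × ℕ) = d := by rw [← hr]
      have := h2 c.1 c.2 d.2 hcol (by rw [e1]; exact hc) (by rw [e2]; exact hdS)
      rw [e1, e2] at this
      omega
  have hrow : ∀ v : ℕ, ∀ c ∈ S, ∀ c' ∈ S, T c' = v → T c < T c' → c.1 < c'.1 := by
    intro v
    induction v with
    | zero => intro c hc c' hc' hv hlt; omega
    | succ v ih =>
      intro c hc c' hc' hv hlt
      have h2c : 2 ≤ T c' := by have := hval c hc; omega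
      obtain ⟨d, hdS, hdv, hdlt⟩ := hpred c' hc' h2c
      rcases eq_or_lt_of_le (show T c ≤ T d by omega) with heq | hlt2
      · have hcd : c = d := huniq c hc d hdS heq
        rw [hcd]; exact hdlt
      · exact lt_trans (ih c hc d hdS (by omega) hlt2) hdlt
  have hdr : ∀ c ∈ S, ∀ c' ∈ S, c.1 = c'.1 → c = c' := by
    intro c hc c' hc' hrr
    rcases lt_trichotomy (T c) (T c') with h | h | h
    · exact absurd (hrow (T c') c hc c' hc' rfl h) (by omega)
    · exact huniq c hc c' hc' h
    · exact absurd (hrow (T c) c' hc' c hc rfl h) (by omega)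
  have hcol0 : ∀ c ∈ S, 1 ≤ c.1 → c.2 = 0 := by
    intro c hc h1c
    have hcσ : c ∈ σ := ((hmemS c).mp hc).1
    have hm0 : (c.1, 0) ∈ σ :=
      σ.up_left_mem (le_refl _) (Nat.zero_le _) (by rw [Prod.mk.eta]; exact hcσ)
    have hS0 : (c.1, 0) ∈ S := (hmemS _).mpr ⟨hm0, by simp only; omega⟩
    have hceq := hdr c hc (c.1, 0) hS0 rfl
    rw [hceq]
  have hrow0 : ∀ c ∈ S, c.1 = 0 → c.2 = ℓ := by
    intro c hc h0
    have hnotlam := ((hmemS c).mp hc).2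
    have hge : ℓ ≤ c.2 := by omega
    have hlmem : (0, ℓ) ∈ σ :=
      σ.up_left_mem (by omega) hge (by rw [Prod.mk.eta]; exact ((hmemS c).mp hc).1)
    have hlS : ((0 : ℕ), ℓ) ∈ S := (hmemS _).mpr ⟨hlmem, by simp only; omega⟩
    have hceq := hdr c hc (0, ℓ) hlS (by rw [h0])
    rw [hceq]
  obtain ⟨c0, hc0S, hc0v⟩ := hex 0 hm
  have hconsec : ∀ c ∈ S, T c < m → ∃ c' ∈ S, T c' = T c + 1 ∧ c'.1 = c.1 + 1 := by
    intro c hc hcm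
    obtain ⟨c', hc'S, hc'v⟩ := hex (T c) hcm
    refine ⟨c', hc'S, hc'v, ?_⟩
    have hlt : c.1 < c'.1 := hrow (T c') c hc c' hc'S rfl (by omega)
    by_contra hgap
    have hgap' : c.1 + 1 < c'.1 := by omega
    have hc'col : c'.2 = 0 := hcol0 c' hc'S (by omega)
    have heσ : ((c'.1 - 1 : ℕ), (0 : ℕ)) ∈ σ :=
      σ.up_left_mem (show c'.1 - 1 ≤ c'.1 by omega) (Nat.zero_le c'.2)
        (show (c'.1, c'.2) ∈ σ from by rw [Prod.mk.eta]; exact ((hmemS c').mp hc'S).1)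
    have heS : ((c'.1 - 1 : ℕ), (0 : ℕ)) ∈ S := (hmemS _).mpr ⟨heσ, by simp only; omega⟩
    have hev := hval _ heS
    have he1 : ((c'.1 - 1 : ℕ), (0 : ℕ)).1 = c'.1 - 1 := rfl
    rcases lt_trichotomy (T ((c'.1 - 1 : ℕ), (0 : ℕ))) (T c + 1) with h | h | h
    · rcases eq_or_lt_of_le (show T ((c'.1 - 1 : ℕ), (0 : ℕ)) ≤ T c by omega) with heq | hlt3
      · have := huniq _ heS c hc heq
        have : ((c'.1 - 1 : ℕ), (0 : ℕ)).1 = c.1 := by rw [this]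
        omega
      · have := hrow (T c) _ heS c hc rfl hlt3
        omega
    · have heqc : ((c'.1 - 1 : ℕ), (0 : ℕ)) = c' := huniq _ heS c' hc'S (by omega)
      have : ((c'.1 - 1 : ℕ), (0 : ℕ)).1 = c'.1 := by rw [heqc]
      omega
    · have := hrow (T ((c'.1 - 1 : ℕ), (0 : ℕ))) c' hc'S _ heS rfl (by omega)
      omega
  have hr0 : c0.1 ≤ 1 := by
    by_contra hgt
    have hc0col : c0.2 = 0 := hcol0 c0 hc0S (by omega)
    have heσ : ((c0.1 - 1 : ℕ), (0 : ℕ)) ∈ σ :=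
      σ.up_left_mem (show c0.1 - 1 ≤ c0.1 by omega) (Nat.zero_le c0.2)
        (show (c0.1, c0.2) ∈ σ from by rw [Prod.mk.eta]; exact ((hmemS c0).mp hc0S).1)
    have heS : ((c0.1 - 1 : ℕ), (0 : ℕ)) ∈ S := (hmemS _).mpr ⟨heσ, by simp only; omega⟩
    have hev := hval _ heS
    rcases eq_or_lt_of_le (show T c0 ≤ T ((c0.1 - 1 : ℕ), (0 : ℕ)) by omega) with heq | hlt3
    · have := huniq _ heS c0 hc0S heq.symm
      have : ((c0.1 - 1 : ℕ), (0 : ℕ)).1 = c0.1 := by rw [this]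
      omega
    · have := hrow (T ((c0.1 - 1 : ℕ), (0 : ℕ))) c0 hc0S _ heS rfl hlt3
      omega
  have hchain : ∀ k, k < m → ∃ c ∈ S, T c = k + 1 ∧ c.1 = c0.1 + k := by
    intro k
    induction k with
    | zero => intro _; exact ⟨c0, hc0S, hc0v, by omega⟩
    | succ k ih =>
      intro hkm
      obtain ⟨c, hcS, hcv, hcr⟩ := ih (by omega)
      obtain ⟨c', hc'S, hc'v, hc'r⟩ := hconsec c hcS (by omega)
      exact ⟨c', hc'S, by omega, by omega⟩
  have hSchar : ∀ c ∈ S, c.1 = c0.1 + (T c - 1) := by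
    intro c hc
    obtain ⟨c', hc'S, hc'v, hc'r⟩ := hchain (T c - 1) (by have := hval c hc; omega)
    have hcc : c = c' := huniq c hc c' hc'S (by have := hval c hc; omega)
    exact (congrArg Prod.fst hcc).trans hc'r
  rcases Nat.lt_or_ge c0.1 1 with hc01 | hc01
  · -- Case A : c0.1 = 0, σ = hk m (ℓ+1), T = T1
    left
    have hc0eq : c0 = ((0 : ℕ), ℓ) := by
      have h2' : c0.2 = ℓ := hrow0 c0 hc0S (by omega)
      have h1' : c0.1 = 0 := by omega
      rw [← h1', ← h2', Prod.mk.eta]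
    have hA1 : ((0 : ℕ), ℓ) ∈ S := by rw [← hc0eq]; exact hc0S
    have hA1v : T ((0 : ℕ), ℓ) = 1 := by rw [← hc0eq]; exact hc0v
    have hA2 : ∀ k, 1 ≤ k → k < m → ((k, 0) : ℕ × ℕ) ∈ S ∧ T (k, 0) = k + 1 := by
      intro k h1k hkm
      obtain ⟨c, hcS, hcv, hcr⟩ := hchain k hkm
      have hcc : c = ((k : ℕ), (0 : ℕ)) := by
        have h2' : c.2 = 0 := hcol0 c hcS (by omega)
        have h1' : c.1 = k := by omega
        rw [← h1', ← h2', Prod.mk.eta]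
      rw [← hcc]
      exact ⟨hcS, hcv⟩
    have hA3 : ∀ p ∈ S, (p.1 = 0 ∧ p.2 = ℓ) ∨ (p.2 = 0 ∧ 1 ≤ p.1 ∧ p.1 < m) := by
      intro p hp
      have hrr := hSchar p hp
      have hv := hval p hp
      rcases Nat.eq_zero_or_pos p.1 with h | h
      · exact Or.inl ⟨h, hrow0 p hp h⟩
      · exact Or.inr ⟨hcol0 p hp h, h, by omega⟩
    constructor
    · ext ⟨i, j⟩
      rw [YoungDiagram.mem_cells, YoungDiagram.mem_cells, mem_hk]
      constructor
      · intro hσ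
        by_cases hlam : (i, j) ∈ hk 1 ℓ
        · rw [mem_hk] at hlam; omega
        · have hpS : (i, j) ∈ S := (hmemS _).mpr ⟨hσ, by rw [mem_hk'] at hlam; exact hlam⟩
          rcases hA3 _ hpS with h | h <;> omega
      · intro h
        rcases h with ⟨hj0, him⟩ | ⟨hi0, hjl⟩
        · rcases Nat.eq_zero_or_pos i with h0 | h0
          · exact (YoungDiagram.mem_cells _).mp (hle ((YoungDiagram.mem_cells _).mpr (mem_hk.mpr (by omega))))
          · subst hj0
            exact ((hmemS _).mp (hA2 i h0 him).1).1
        · rcases Nat.lt_or_ge j ℓ with h0 | h0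
          · exact (YoungDiagram.mem_cells _).mp (hle ((YoungDiagram.mem_cells _).mpr (mem_hk.mpr (by omega))))
          · have hje : j = ℓ := by omega
            subst hje; subst hi0
            exact ((hmemS _).mp hA1).1
    · funext p
      by_cases hp : p ∈ S
      · rcases hA3 p hp with ⟨ha, hb⟩ | ⟨ha, hb, hc⟩
        · have hpe : p = ((0 : ℕ), ℓ) := by rw [← ha, ← hb, Prod.mk.eta]
          rw [hpe, hA1v]
          show 1 = if (0 : ℕ) = 0 ∧ ℓ = ℓ then 1 else _
          rw [if_pos ⟨rfl, rfl⟩]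
        · have hpe : p = ((p.1 : ℕ), (0 : ℕ)) := by rw [← ha, Prod.mk.eta]
          rw [hpe, (hA2 p.1 hb hc).2]
          show p.1 + 1 = if p.1 = 0 ∧ (0 : ℕ) = ℓ then 1 else
            if (0 : ℕ) = 0 ∧ 1 ≤ p.1 ∧ p.1 < m then p.1 + 1 else 0
          rw [if_neg (by omega), if_pos ⟨rfl, hb, hc⟩]
      · have h0 : T p = 0 := by
          by_contra h; exact hp ((h1 p).mpr h)
        rw [h0]
        have hT1 : T1 ℓ m p = 0 := by
          simp only [T1]
          split_ifs with ha hb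
          · exfalso
            have hpe : p = ((0 : ℕ), ℓ) := by rw [← ha.1, ← ha.2, Prod.mk.eta]
            rw [hpe] at hp; exact hp hA1
          · exfalso
            have hpe : p = (p.1, (0 : ℕ)) := by rw [← hb.1, Prod.mk.eta]
            rw [hpe] at hp; exact hp (hA2 p.1 hb.2.1 hb.2.2).1
          · rfl
        rw [hT1]
  · -- Case B : c0.1 = 1, σ = hk (m+1) ℓ, T = T2
    right
    have hB2 : ∀ k, 1 ≤ k → k ≤ m → ((k, 0) : ℕ × ℕ) ∈ S ∧ T (k, 0) = k := by
      intro k h1k hkm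
      obtain ⟨c, hcS, hcv, hcr⟩ := hchain (k - 1) (by omega)
      have h2' : c.2 = 0 := hcol0 c hcS (by omega)
      have hcc : c = ((k : ℕ), (0 : ℕ)) := by rw [← show c.1 = k by omega, ← h2', Prod.mk.eta]
      rw [← hcc]
      exact ⟨hcS, by omega⟩
    have hB3 : ∀ p ∈ S, p.2 = 0 ∧ 1 ≤ p.1 ∧ p.1 ≤ m := by
      intro p hp
      have hrr := hSchar p hp
      have hv := hval p hp
      have h1p : 1 ≤ p.1 := by omega
      exact ⟨hcol0 p hp h1p, h1p, by omega⟩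
    constructor
    · ext ⟨i, j⟩
      rw [YoungDiagram.mem_cells, YoungDiagram.mem_cells, mem_hk]
      constructor
      · intro hσ
        by_cases hlam : (i, j) ∈ hk 1 ℓ
        · rw [mem_hk] at hlam; omega
        · have hpS : (i, j) ∈ S := (hmemS _).mpr ⟨hσ, by rw [mem_hk'] at hlam; exact hlam⟩
          have := hB3 _ hpS
          omega
      · intro h
        rcases h with ⟨hj0, him⟩ | ⟨hi0, hjl⟩
        · rcases Nat.eq_zero_or_pos i with h0 | h0
          · exact (YoungDiagram.mem_cells _).mp (hle ((YoungDiagram.mem_cells _).mpr (mem_hk.mpr (by omega))))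
          · subst hj0
            exact ((hmemS _).mp (hB2 i h0 (by omega)).1).1
        · exact (YoungDiagram.mem_cells _).mp (hle ((YoungDiagram.mem_cells _).mpr (mem_hk.mpr (by omega))))
    · funext p
      by_cases hp : p ∈ S
      · obtain ⟨ha, hb, hc⟩ := hB3 p hp
        have hpe : p = (p.1, (0 : ℕ)) := by rw [← ha, Prod.mk.eta]
        rw [hpe, (hB2 p.1 hb hc).2]
        show p.1 = if (0 : ℕ) = 0 ∧ 1 ≤ p.1 ∧ p.1 ≤ m then p.1 else 0
        rw [if_pos ⟨rfl, hb, hc⟩]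
      · have h0 : T p = 0 := by by_contra h; exact hp ((h1 p).mpr h)
        rw [h0]
        have hT2 : T2 m p = 0 := by
          simp only [T2]
          split_ifs with ha
          · exfalso
            have hpe : p = (p.1, (0 : ℕ)) := by rw [← ha.1, Prod.mk.eta]
            rw [hpe] at hp; exact hp (hB2 p.1 ha.2.1 ha.2.2).1
          · rfl
        rw [hT2]
lemma lrCoeff_hook1 {ℓ m : ℕ} (hl : 0 < ℓ) (hm : 0 < m) :
    lrCoeff (hk 1 ℓ) (hk m 1) (hk m (ℓ + 1)) = 1 := by
  have hle : hk 1 ℓ ≤ hk m (ℓ + 1) := hk_le_hk (by omega) (by omega)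
  rw [lrCoeff, if_pos hle, Nat.card_eq_one_iff_unique]
  refine ⟨⟨fun x y => ?_⟩, ⟨⟨T1 ℓ m, isLR_T1 hl hm⟩⟩⟩
  obtain ⟨T, hT⟩ := x
  obtain ⟨T', hT'⟩ := y
  have hne : hk m (ℓ + 1) ≠ hk (m + 1) ℓ := hk_ne_hk hm (by omega) (by omega) hl (by omega)
  rcases main_structure hl hm hle hT with ⟨_, h⟩ | ⟨hσ, _⟩
  · rcases main_structure hl hm hle hT' with ⟨_, h'⟩ | ⟨hσ', _⟩
    · exact Subtype.ext (h.trans h'.symm)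
    · exact absurd hσ' hne
  · exact absurd hσ hne

lemma lrCoeff_hook2 {ℓ m : ℕ} (hl : 0 < ℓ) (hm : 0 < m) :
    lrCoeff (hk 1 ℓ) (hk m 1) (hk (m + 1) ℓ) = 1 := by
  have hle : hk 1 ℓ ≤ hk (m + 1) ℓ := hk_le_hk (by omega) (le_refl _)
  rw [lrCoeff, if_pos hle, Nat.card_eq_one_iff_unique]
  refine ⟨⟨fun x y => ?_⟩, ⟨⟨T2 m, isLR_T2 hl hm⟩⟩⟩
  obtain ⟨T, hT⟩ := x
  obtain ⟨T', hT'⟩ := y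
  have hne : hk (m + 1) ℓ ≠ hk m (ℓ + 1) := hk_ne_hk (by omega) hm hl (by omega) (by omega)
  rcases main_structure hl hm hle hT with ⟨hσ, _⟩ | ⟨_, h⟩
  · exact absurd hσ hne
  · rcases main_structure hl hm hle hT' with ⟨hσ', _⟩ | ⟨_, h'⟩
    · exact absurd hσ' hne
    · exact Subtype.ext (h.trans h'.symm)

lemma lrCoeff_eq_zero {ℓ m : ℕ} (hl : 0 < ℓ) (hm : 0 < m) {σ : YoungDiagram}
    (hσ1 : σ ≠ hk m (ℓ + 1)) (hσ2 : σ ≠ hk (m + 1) ℓ) :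
    lrCoeff (hk 1 ℓ) (hk m 1) σ = 0 := by
  rw [lrCoeff]
  split_ifs with hle
  · have : IsEmpty {T : ℕ × ℕ → ℕ // IsLRTableau (hk 1 ℓ) (hk m 1) σ T} := by
      refine ⟨fun x => ?_⟩
      obtain ⟨T, hT⟩ := x
      rcases main_structure hl hm hle hT with ⟨h, _⟩ | ⟨h, _⟩
      · exact hσ1 h
      · exact hσ2 h
    exact Nat.card_of_isEmpty
  · rfl
lemma prod_range_sub_self (c : ℕ) : ∏ j ∈ Finset.range c, (c - j) = c.factorial := by
  induction c with
  | zero => simp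
  | succ c ih =>
    rw [Finset.prod_range_succ']
    have hcong : ∀ j ∈ Finset.range c, c + 1 - (j + 1) = c - j := fun j hj => by omega
    rw [Finset.prod_congr rfl hcong, ih, Nat.factorial_succ]
    rw [Nat.sub_zero]
    ring

lemma hk_cells_eq (r c : ℕ) :
    (hk (r+1) (c+1)).cells =
      (({0} : Finset ℕ) ×ˢ Finset.range (c+1)) ∪ (Finset.Ico 1 (r+1) ×ˢ ({0} : Finset ℕ)) := by
  ext ⟨i, j⟩
  rw [YoungDiagram.mem_cells, mem_hk, Finset.mem_union, Finset.mem_product, Finset.mem_product,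
    Finset.mem_singleton, Finset.mem_singleton, Finset.mem_range, Finset.mem_Ico]
  omega

lemma hookProd_hk (r c : ℕ) :
    hookProd (hk (r+1) (c+1)) = (((r + c + 1) * r.factorial * c.factorial : ℕ) : ℚ) := by
  have hdisj : Disjoint (({0} : Finset ℕ) ×ˢ Finset.range (c+1))
      (Finset.Ico 1 (r+1) ×ˢ ({0} : Finset ℕ)) := by
    rw [Finset.disjoint_left]
    rintro ⟨i, j⟩ hij hij'
    rw [Finset.mem_product, Finset.mem_singleton] at hij
    rw [Finset.mem_product, Finset.mem_Ico] at hij'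
    omega
  rw [hookProd, hk_cells_eq, Finset.prod_union hdisj, ← Nat.cast_prod, ← Nat.cast_prod,
    ← Nat.cast_mul]
  congr 1
  have hA : (∏ p ∈ (({0} : Finset ℕ) ×ˢ Finset.range (c+1)),
      ((hk (r+1) (c+1)).rowLen p.1 + (hk (r+1) (c+1)).colLen p.2 - p.1 - p.2 - 1)) =
      (r + c + 1) * c.factorial := by
    rw [Finset.prod_product, Finset.prod_singleton, Finset.prod_range_succ']
    have h0 : (hk (r+1) (c+1)).rowLen 0 + (hk (r+1) (c+1)).colLen 0 - 0 - 0 - 1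
        = r + c + 1 := by
      rw [hk_rowLen_zero (by omega) (by omega), hk_colLen_zero (by omega) (by omega)]
      omega
    have hj : ∀ j ∈ Finset.range c,
        (hk (r+1) (c+1)).rowLen 0 + (hk (r+1) (c+1)).colLen (j+1) - 0 - (j+1) - 1 = c - j := by
      intro j hjr
      rw [Finset.mem_range] at hjr
      rw [hk_rowLen_zero (by omega) (by omega), hk_colLen_pos (by omega) (by omega),
        if_pos (by omega)]
      omega
    rw [Finset.prod_congr rfl hj, prod_range_sub_self, h0]
    ring
  have hB : (∏ p ∈ (Finset.Ico 1 (r+1) ×ˢ ({0} : Finset ℕ)),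
      ((hk (r+1) (c+1)).rowLen p.1 + (hk (r+1) (c+1)).colLen p.2 - p.1 - p.2 - 1)) =
      r.factorial := by
    rw [Finset.prod_product, Finset.prod_Ico_eq_prod_range]
    have hj : ∀ i ∈ Finset.range (r + 1 - 1),
        (∏ y ∈ ({0} : Finset ℕ),
          ((hk (r+1) (c+1)).rowLen (1+i) + (hk (r+1) (c+1)).colLen y - (1+i) - y - 1)) =
        r - i := by
      intro i hir
      rw [Finset.mem_range] at hir
      rw [Finset.prod_singleton, hk_rowLen_pos (by omega) (by omega), if_pos (by omega),
        hk_colLen_zero (by omega) (by omega)]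
      omega
    rw [Finset.prod_congr rfl hj]
    have : r + 1 - 1 = r := by omega
    rw [this, prod_range_sub_self]
  rw [hA, hB]
  ring

lemma skew1_cells (r c : ℕ) :
    (hk (r+1) (c+1)).cells \ (hk (r+1) 1).cells = ({0} : Finset ℕ) ×ˢ Finset.Ico 1 (c+1) := by
  ext ⟨i, j⟩
  rw [Finset.mem_sdiff, YoungDiagram.mem_cells, YoungDiagram.mem_cells, mem_hk, mem_hk,
    Finset.mem_product, Finset.mem_singleton, Finset.mem_Ico]
  omega

lemma skew2_cells (r c : ℕ) (hr : 0 < r) :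
    (hk (r+1) (c+1)).cells \ (hk r 1).cells =
      insert ((r : ℕ), (0 : ℕ)) (({0} : Finset ℕ) ×ˢ Finset.Ico 1 (c+1)) := by
  ext ⟨i, j⟩
  rw [Finset.mem_sdiff, YoungDiagram.mem_cells, YoungDiagram.mem_cells, mem_hk, mem_hk,
    Finset.mem_insert, Finset.mem_product, Finset.mem_singleton, Finset.mem_Ico, Prod.mk.injEq]
  omega

lemma prod_ico_content (n : ℚ) (c : ℕ) :
    (∏ p ∈ (({0} : Finset ℕ) ×ˢ Finset.Ico 1 (c+1)), (n + (p.2 : ℚ) - (p.1 : ℚ))) =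
      ∏ i ∈ Finset.range c, (n + i + 1) := by
  rw [Finset.prod_product, Finset.prod_singleton, Finset.prod_Ico_eq_prod_range]
  have : c + 1 - 1 = c := by omega
  rw [this]
  refine Finset.prod_congr rfl fun i hi => ?_
  push_cast
  ring

lemma skew1_eval (n : ℚ) (r c : ℕ) :
    skewContPoly n (hk (r+1) (c+1)) (hk (r+1) 1) = ∏ i ∈ Finset.range c, (n + i + 1) := by
  rw [skewContPoly, skew1_cells, prod_ico_content]

lemma skew2_eval (n : ℚ) (r c : ℕ) (hr : 0 < r) :
    skewContPoly n (hk (r+1) (c+1)) (hk r 1) =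
      (n - r) * ∏ i ∈ Finset.range c, (n + i + 1) := by
  rw [skewContPoly, skew2_cells r c hr, Finset.prod_insert (by
    rw [Finset.mem_product, Finset.mem_singleton]
    intro h
    exact absurd h.1 (by omega)), prod_ico_content]
  push_cast
  ring

lemma gbinom_eq (x : ℚ) (n : ℕ) :
    gbinom (x + n) n = (∏ i ∈ Finset.range n, (x + i + 1)) / n.factorial := by
  rw [gbinom]
  congr 1
  rw [← Finset.prod_range_reflect (fun i => x + i + 1) n]
  refine Finset.prod_congr rfl fun i hi => ?_
  rw [Finset.mem_range] at hi
  have h1 : n - 1 - i = n - (i + 1) := by omega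
  rw [h1, Nat.cast_sub (by omega)]
  push_cast
  ring

/-- `P_{(1^ℓ),(1^m)}(e,f) = C(e+m−1, m−1)·C(f+ℓ−1, ℓ−1)·(ef − ℓm)/(ℓm)`. -/
theorem P_col_col (ℓ m : ℕ) (hl : 0 < ℓ) (hm : 0 < m) (e f : ℚ) :
    P (rect ℓ 1) (rect m 1) e f =
      gbinom (e + m - 1) (m - 1) * gbinom (f + ℓ - 1) (ℓ - 1) *
        (e * f - (ℓ : ℚ) * m) / ((ℓ : ℚ) * m) := by
  obtain ⟨l', rfl⟩ : ∃ l', ℓ = l' + 1 := ⟨ℓ - 1, by omega⟩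
  obtain ⟨m', rfl⟩ : ∃ m', m = m' + 1 := ⟨m - 1, by omega⟩
  simp only [P, rect_eq_hk hl, rect_eq_hk hm, hk_transpose]
  have hsupp : Function.support (fun nu : YoungDiagram =>
      (lrCoeff (hk 1 (l'+1)) (hk (m'+1) 1) nu.transpose : ℚ) *
        skewContPoly e nu (hk (l'+1) 1) * skewContPoly f nu.transpose (hk (m'+1) 1) /
        hookProd nu) ⊆
      ↑({hk (l'+1) (m'+1+1), hk (l'+1+1) (m'+1)} : Finset YoungDiagram) := by
    intro ν hν
    rw [Function.mem_support] at hν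
    by_contra hmem
    rw [Finset.coe_insert, Finset.coe_singleton, Set.mem_insert_iff,
      Set.mem_singleton_iff] at hmem
    push_neg at hmem
    have hz : lrCoeff (hk 1 (l'+1)) (hk (m'+1) 1) ν.transpose = 0 := by
      refine lrCoeff_eq_zero hl hm ?_ ?_
      · intro h
        apply hmem.2
        rw [← YoungDiagram.transpose_transpose ν, h, hk_transpose]
      · intro h
        apply hmem.1
        rw [← YoungDiagram.transpose_transpose ν, h, hk_transpose]
    apply hν
    rw [hz]
    simp
  rw [finsum_eq_sum_of_support_subset _ hsupp, Finset.sum_insert (by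
      rw [Finset.mem_singleton]
      exact hk_ne_hk (by omega) (by omega) (by omega) (by omega) (by omega)),
    Finset.sum_singleton]
  simp only [hk_transpose, lrCoeff_hook2 hl hm, lrCoeff_hook1 hl hm,
    hookProd_hk l' (m'+1), hookProd_hk (l'+1) m',
    skew1_eval e l' (m'+1), skew1_eval f m' (l'+1),
    skew2_eval e (l'+1) m' (by omega), skew2_eval f (m'+1) l' (by omega)]
  have hg1 : (e + ((m'+1 : ℕ) : ℚ) - 1 : ℚ) = e + (m' : ℚ) := by push_cast; ring
  have hg2 : (f + ((l'+1 : ℕ) : ℚ) - 1 : ℚ) = f + (l' : ℚ) := by push_cast; ring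
  rw [show m' + 1 - 1 = m' from rfl, show l' + 1 - 1 = l' from rfl, hg1, hg2,
    gbinom_eq e m', gbinom_eq f l']
  rw [Finset.prod_range_succ (fun i => e + i + 1) m', Finset.prod_range_succ (fun i => f + i + 1) l']
  have h1 : ((l'.factorial : ℚ)) ≠ 0 := Nat.cast_ne_zero.mpr (Nat.factorial_ne_zero _)
  have h2 : ((m'.factorial : ℚ)) ≠ 0 := Nat.cast_ne_zero.mpr (Nat.factorial_ne_zero _)
  have h3 : ((l' : ℚ) + (m' : ℚ) + 2) ≠ 0 := by positivity
  have h4 : ((l' : ℚ) + 1) ≠ 0 := by positivity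
  have h5 : ((m' : ℚ) + 1) ≠ 0 := by positivity
  push_cast [Nat.factorial_succ]
  field_simp
  ring

end ChernTensor
end
end
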